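/- arXiv:2304.12055 — 7 statements merged into one kernel-verified Lean document; each statement's English description precedes it below -/
import Mathlib

section
/- For positive semi-definite matrices A and B, define Tr[A ∧ B] := inf over operators T with 0 ≤ T ≤ 1 of Tr[A(1−T) + BT]. Then Tr[A ∧ B] = (1/2)(Tr[A] + Tr[B] − Tr|A − B|), where |X| denotes the operator absolute value. -/
open Matrix BigOperators ComplexOrder

noncomputable section

/-- Real power of a Hermitian matrix via spectral decomposition
(pseudo-inverse convention: `0 ^ r = 0` for `r ≠ 0`). -/
noncomputable def mpow {n : Type*} [Fintype n] [DecidableEq n]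
    (A : Matrix n n ℂ) (r : ℝ) : Matrix n n ℂ :=
  if hA : A.IsHermitian then
    (hA.eigenvectorUnitary : Matrix n n ℂ) *
      Matrix.diagonal (fun i => ((hA.eigenvalues i ^ r : ℝ) : ℂ)) *
      (star (hA.eigenvectorUnitary : Matrix n n ℂ))
  else 0

/-- Trace norm `Tr |A| = Tr[(Aᴴ A)^{1/2}]`. -/
noncomputable def traceNorm {n : Type*} [Fintype n] [DecidableEq n]
    (A : Matrix n n ℂ) : ℝ :=
  ((mpow (Aᴴ * A) (1 / 2)).trace).re

/-- Trace of the noncommutative minimal: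
`Tr[A ∧ B] = inf_{0 ≤ T ≤ 1} Tr[A(1-T) + B T]`. -/
noncomputable def trMin {n : Type*} [Fintype n] [DecidableEq n]
    (A B : Matrix n n ℂ) : ℝ :=
  sInf {x : ℝ | ∃ T : Matrix n n ℂ, T.PosSemidef ∧ (1 - T).PosSemidef ∧
    x = ((A * (1 - T) + B * T).trace).re}

/-- A density operator: positive semi-definite with unit trace. -/
def IsDensity {n : Type*} [Fintype n] [DecidableEq n] (ρ : Matrix n n ℂ) : Prop :=
  ρ.PosSemidef ∧ ρ.trace = 1

/-- Tensor (Kronecker) product of two square matrices, indexed by pairs. -/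
def kron {a b : Type*} (A : Matrix a a ℂ) (B : Matrix b b ℂ) :
    Matrix (a × b) (a × b) ℂ :=
  fun p q => A p.1 q.1 * B p.2 q.2

/-- `M`-fold tensor power of a square matrix. -/
def tpow {a : Type*} [Fintype a] (τ : Matrix a a ℂ) (M : ℕ) :
    Matrix (Fin M → a) (Fin M → a) ℂ :=
  fun f g => ∏ m, τ (f m) (g m)

/-- Partial trace over the first tensor factor. -/
def ptraceA {a b : Type*} [Fintype a] (ρ : Matrix (a × b) (a × b) ℂ) :
    Matrix b b ℂ :=
  fun x y => ∑ i, ρ (i, x) (i, y)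

/-- Partial trace over the second tensor factor. -/
def ptraceB {a b : Type*} [Fintype b] (ρ : Matrix (a × b) (a × b) ℂ) :
    Matrix a a ℂ :=
  fun x y => ∑ j, ρ (x, j) (y, j)

/-- The convex-splitting state
`ω = (1/M) ∑ₘ ρ_{AₘB} ⊗ (⊗_{j≠m} τ_{Aⱼ})` on `A^{⊗M} ⊗ B`. -/
def csplit {a b : Type*} [Fintype a] (ρ : Matrix (a × b) (a × b) ℂ)
    (τ : Matrix a a ℂ) (M : ℕ) :
    Matrix ((Fin M → a) × b) ((Fin M → a) × b) ℂ :=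
  fun p q => (M : ℂ)⁻¹ *
    ∑ m, ρ (p.1 m, p.2) (q.1 m, q.2) * ∏ j ∈ Finset.univ.erase m, τ (p.1 j) (q.1 j)

/-- The sandwiched Rényi divergence
`D*_α(ρ‖σ) = (1/(α-1)) log Tr[(σ^{(1-α)/(2α)} ρ σ^{(1-α)/(2α)})^α]`. -/
noncomputable def Dsand {n : Type*} [Fintype n] [DecidableEq n]
    (α : ℝ) (ρ σ : Matrix n n ℂ) : ℝ :=
  (α - 1)⁻¹ *
    Real.log (((mpow (mpow σ ((1 - α) / (2 * α)) * ρ * mpow σ ((1 - α) / (2 * α))) α).trace).re)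

/-- The Petz–Rényi divergence `D_β(ρ‖σ) = (1/(β-1)) log Tr[ρ^β σ^{1-β}]`. -/
noncomputable def DPetz {n : Type*} [Fintype n] [DecidableEq n]
    (β : ℝ) (ρ σ : Matrix n n ℂ) : ℝ :=
  (β - 1)⁻¹ * Real.log (((mpow ρ β * mpow σ (1 - β)).trace).re)

/-- Doubly-minimized sandwiched Rényi mutual information
`I^{↓↓}_α(A:B)_ρ = inf_{τ_A, σ_B} D*_α(ρ_{AB} ‖ τ_A ⊗ σ_B)`. -/
noncomputable def Idd {a b : Type*} [Fintype a] [DecidableEq a] [Fintype b] [DecidableEq b]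
    (α : ℝ) (ρ : Matrix (a × b) (a × b) ℂ) : ℝ :=
  sInf {x : ℝ | ∃ (τ : Matrix a a ℂ) (σ : Matrix b b ℂ),
    IsDensity τ ∧ IsDensity σ ∧ x = Dsand α ρ (kron τ σ)}

/-- Symmetric operator geometric mean `X # Y = X^{1/2}(X^{-1/2} Y X^{-1/2})^{1/2} X^{1/2}`. -/
noncomputable def geomMean {n : Type*} [Fintype n] [DecidableEq n]
    (X Y : Matrix n n ℂ) : Matrix n n ℂ :=
  mpow X (1 / 2) * mpow (mpow X (-(1 / 2)) * Y * mpow X (-(1 / 2))) (1 / 2) * mpow X (1 / 2)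

/-- The embedding `π_m : X_{AB} ↦ X_{A_m B} ⊗ 1_{A_1 … (m) … A_M}`. -/
def piMap {a b : Type*} [Fintype a] [DecidableEq a] (M : ℕ) (m : Fin M)
    (X : Matrix (a × b) (a × b) ℂ) :
    Matrix ((Fin M → a) × b) ((Fin M → a) × b) ℂ :=
  fun p q => X (p.1 m, p.2) (q.1 m, q.2) *
    ∏ j ∈ Finset.univ.erase m, (if p.1 j = q.1 j then (1 : ℂ) else 0)

/-- The map `E_m : X_{AB} ↦ Tr_{A_m}[X τ_{A_m}] ⊗ 1_{A_1 … A_M}`. -/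
def eMap {a b : Type*} [Fintype a] [DecidableEq a] (τ : Matrix a a ℂ) (M : ℕ) (_m : Fin M)
    (X : Matrix (a × b) (a × b) ℂ) :
    Matrix ((Fin M → a) × b) ((Fin M → a) × b) ℂ :=
  fun p q => (∑ i, ∑ i', X (i, p.2) (i', q.2) * τ i' i) *
    ∏ j : Fin M, (if p.1 j = q.1 j then (1 : ℂ) else 0)

/-- The convex-splitting fluctuation map `Θ = (1/M) ∑ₘ (π_m − E_m)`. -/
noncomputable def thetaMap {a b : Type*} [Fintype a] [DecidableEq a] (τ : Matrix a a ℂ) (M : ℕ)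
    (X : Matrix (a × b) (a × b) ℂ) :
    Matrix ((Fin M → a) × b) ((Fin M → a) × b) ℂ :=
  (M : ℂ)⁻¹ • ∑ m, (piMap M m X - eMap τ M m X)

/-- The weighted (Kosaki) `L₂` norm `‖X‖_{2,γ,σ} = (Tr|σ^{(1-γ)/2} X σ^{γ/2}|²)^{1/2}`. -/
noncomputable def wnorm2 {n : Type*} [Fintype n] [DecidableEq n]
    (γ : ℝ) (σ X : Matrix n n ℂ) : ℝ :=
  Real.sqrt ((((mpow σ ((1 - γ) / 2) * X * mpow σ (γ / 2))ᴴ *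
      (mpow σ ((1 - γ) / 2) * X * mpow σ (γ / 2))).trace).re)

/-- The weighted inner product `⟨X,Y⟩_{γ,σ} = Tr[Xᴴ σ^{1-γ} Y σ^γ]`. -/
noncomputable def winner {n : Type*} [Fintype n] [DecidableEq n]
    (γ : ℝ) (σ X Y : Matrix n n ℂ) : ℂ :=
  (Xᴴ * mpow σ (1 - γ) * Y * mpow σ γ).trace

end
section Aux
variable {n : Type*} [Fintype n] [DecidableEq n]
open scoped MatrixOrder

lemma trace_unitary_conj (U : unitaryGroup n ℂ) (M : Matrix n n ℂ) :
    ((U : Matrix n n ℂ) * M * star (U : Matrix n n ℂ)).trace = M.trace := by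
  rw [trace_mul_cycle, (Matrix.mem_unitaryGroup_iff').mp U.2, one_mul]

lemma unitary_conj_mul (U : unitaryGroup n ℂ) (D E : Matrix n n ℂ) :
    ((U : Matrix n n ℂ) * D * star (U : Matrix n n ℂ)) *
      ((U : Matrix n n ℂ) * E * star (U : Matrix n n ℂ)) =
    (U : Matrix n n ℂ) * (D * E) * star (U : Matrix n n ℂ) := by
  have h : star (U : Matrix n n ℂ) * U = 1 := (Matrix.mem_unitaryGroup_iff').mp U.2
  calc ((U : Matrix n n ℂ) * D * star (U : Matrix n n ℂ)) *
      ((U : Matrix n n ℂ) * E * star (U : Matrix n n ℂ))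
      = (U : Matrix n n ℂ) * D * (star (U : Matrix n n ℂ) * U) * E * star (U : Matrix n n ℂ) := by
        noncomm_ring
    _ = _ := by rw [h]; noncomm_ring

lemma mpow_half_eq_sqrt {P : Matrix n n ℂ} (hP : P.PosSemidef) :
    mpow P (1 / 2) = CFC.sqrt P := by
  rw [mpow, dif_pos hP.1, CFC.sqrt_eq_cfc, cfc_nnreal_eq_real _ P hP.nonneg, hP.1.cfc_eq,
    IsHermitian.cfc]
  simp only [Unitary.conjStarAlgAut_apply, Unitary.coe_star]
  have h : (fun i => ((hP.1.eigenvalues i ^ ((1:ℝ)/2) : ℝ) : ℂ))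
      = ((RCLike.ofReal : ℝ → ℂ) ∘ (fun x => ((NNReal.sqrt x.toNNReal : NNReal) : ℝ))
          ∘ hP.1.eigenvalues) := by
    funext i
    simp [Function.comp, Real.coe_sqrt, Real.coe_toNNReal _ (hP.eigenvalues_nonneg i),
      Real.sqrt_eq_rpow]
  rw [h]

lemma traceNorm_herm (C : Matrix n n ℂ) (hC : C.IsHermitian) :
    traceNorm C = ∑ i, |hC.eigenvalues i| := by
  set U := hC.eigenvectorUnitary with hUdef
  set S : Matrix n n ℂ :=
    (U : Matrix n n ℂ) * diagonal (fun i => ((|hC.eigenvalues i| : ℝ) : ℂ))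
      * star (U : Matrix n n ℂ) with hSdef
  have hSpsd : S.PosSemidef := by
    refine (posSemidef_diagonal_iff.mpr fun i => ?_).mul_mul_conjTranspose_same _
    exact Complex.zero_le_real.mpr (abs_nonneg _)
  have hP : (Cᴴ * C).PosSemidef := posSemidef_conjTranspose_mul_self C
  have key : C = (U : Matrix n n ℂ) * diagonal (fun i => ((hC.eigenvalues i : ℝ) : ℂ))
      * star (U : Matrix n n ℂ) := hC.spectral_theorem
  have hsq : S ^ 2 = Cᴴ * C := by
    rw [hSdef, pow_two, unitary_conj_mul, diagonal_mul_diagonal]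
    have : (fun i => ((|hC.eigenvalues i| : ℝ) : ℂ) * ((|hC.eigenvalues i| : ℝ) : ℂ))
        = fun i => ((hC.eigenvalues i : ℝ) : ℂ) * ((hC.eigenvalues i : ℝ) : ℂ) := by
      funext i
      rw [← Complex.ofReal_mul, ← Complex.ofReal_mul, abs_mul_abs_self]
    rw [this, ← diagonal_mul_diagonal, ← unitary_conj_mul U, hC.eq, ← key]
  have hS_eq : S = CFC.sqrt (Cᴴ * C) :=
    ((CFC.sqrt_eq_iff _ _ hP.nonneg hSpsd.nonneg).mpr (by rw [← pow_two]; exact hsq)).symm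
  rw [traceNorm, mpow_half_eq_sqrt hP, ← hS_eq, hSdef, trace_unitary_conj, trace_diagonal]
  rw [Complex.re_sum]
  simp

lemma diag_re_mem {T : Matrix n n ℂ} (hT : T.PosSemidef) (i : n) :
    0 ≤ (T i i).re ∧ (T i i).im = 0 := by
  have := hT.diag_nonneg (i := i)
  rw [Complex.le_def] at this
  exact ⟨this.1, this.2.symm⟩

end Aux

/-- Closed-form expression for the trace of the noncommutative minimal:
`Tr[A ∧ B] = (1/2)(Tr A + Tr B − Tr|A − B|)` for positive semi-definite `A`, `B`. -/
theorem trMin_eq_half_trace_add_trace_sub_traceNorm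
    {n : Type*} [Fintype n] [DecidableEq n]
    (A B : Matrix n n ℂ) (hA : A.PosSemidef) (hB : B.PosSemidef) :
    trMin A B = (1 / 2) * ((A.trace).re + (B.trace).re - traceNorm (A - B)) := by
  have hC : (A - B).IsHermitian := hA.1.sub hB.1
  set lam := hC.eigenvalues with hlam
  set U := hC.eigenvectorUnitary with hUdef
  have hUnit : star (U : Matrix n n ℂ) * U = 1 := (Matrix.mem_unitaryGroup_iff').mp U.2
  have hUnit' : (U : Matrix n n ℂ) * star (U : Matrix n n ℂ) = 1 :=
    (Matrix.mem_unitaryGroup_iff).mp U.2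
  have key : A - B = (U : Matrix n n ℂ) * diagonal (fun i => ((lam i : ℝ) : ℂ))
      * star (U : Matrix n n ℂ) := hC.spectral_theorem
  -- trace algebra
  have halg : ∀ T : Matrix n n ℂ,
      (A * (1 - T) + B * T).trace = A.trace - ((A - B) * T).trace := by
    intro T
    rw [Matrix.mul_sub, Matrix.mul_one, Matrix.sub_mul, trace_add, trace_sub, trace_sub]
    ring
  -- the lower bound
  have hbound : ∀ T : Matrix n n ℂ, T.PosSemidef → (1 - T).PosSemidef →
      (((A - B) * T).trace).re ≤ ∑ i, max (lam i) 0 := by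
    intro T hT hT1
    set t := star (U : Matrix n n ℂ) * T * (U : Matrix n n ℂ) with ht
    have htpsd : t.PosSemidef := by
      have := hT.mul_mul_conjTranspose_same (star (U : Matrix n n ℂ))
      simpa [Matrix.star_eq_conjTranspose, conjTranspose_conjTranspose, ht] using this
    have h1teq : star (U : Matrix n n ℂ) * (1 - T) * (U : Matrix n n ℂ) = 1 - t := by
      rw [Matrix.mul_sub, Matrix.mul_one, Matrix.sub_mul, hUnit, ht]
    have h1t : (1 - t).PosSemidef := by
      rw [← h1teq]
      have := hT1.mul_mul_conjTranspose_same (star (U : Matrix n n ℂ))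
      simp only [Matrix.star_eq_conjTranspose, conjTranspose_conjTranspose] at this ⊢
      exact this
    have htr : ((A - B) * T).trace
        = (diagonal (fun i => ((lam i : ℝ) : ℂ)) * t).trace := by
      conv_lhs => rw [key]
      rw [ht, mul_assoc, trace_mul_comm, ← mul_assoc, trace_mul_comm]
    have hdiag : ∀ i, 0 ≤ (t i i).re ∧ (t i i).re ≤ 1 := by
      intro i
      refine ⟨(diag_re_mem htpsd i).1, ?_⟩
      have := (diag_re_mem h1t i).1
      simp only [Matrix.sub_apply, Matrix.one_apply_eq, Complex.sub_re, Complex.one_re] at this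
      linarith
    have htre : (((A - B) * T).trace).re = ∑ i, lam i * (t i i).re := by
      rw [htr, Matrix.trace, Complex.re_sum]
      refine Finset.sum_congr rfl fun i _ => ?_
      simp [Matrix.diag, Matrix.diagonal_mul, Complex.mul_re]
    rw [htre]
    refine Finset.sum_le_sum fun i _ => ?_
    rcases le_or_gt 0 (lam i) with h | h
    · calc lam i * (t i i).re ≤ lam i * 1 := by
            exact mul_le_mul_of_nonneg_left (hdiag i).2 h
        _ = lam i := mul_one _
        _ ≤ max (lam i) 0 := le_max_left _ _
    · calc lam i * (t i i).re ≤ 0 := mul_nonpos_of_nonpos_of_nonneg h.le (hdiag i).1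
        _ ≤ max (lam i) 0 := le_max_right _ _
  -- the optimal T
  set T₀ : Matrix n n ℂ := (U : Matrix n n ℂ)
      * diagonal (fun i => if 0 < lam i then (1 : ℂ) else 0)
      * star (U : Matrix n n ℂ) with hT₀def
  have hT₀psd : T₀.PosSemidef := by
    refine (posSemidef_diagonal_iff.mpr fun i => ?_).mul_mul_conjTranspose_same _
    split <;> simp
  have hsub : 1 - T₀ = (U : Matrix n n ℂ)
      * diagonal (fun i => if 0 < lam i then (0 : ℂ) else 1)
      * star (U : Matrix n n ℂ) := by
    have hone : (1 : Matrix n n ℂ)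
        = (U : Matrix n n ℂ) * diagonal (fun _ => (1 : ℂ)) * star (U : Matrix n n ℂ) := by
      rw [show Matrix.diagonal (fun _ => (1 : ℂ)) = (1 : Matrix n n ℂ) from Matrix.diagonal_one,
        mul_one, hUnit']
    have hfun : (fun i => (1 : ℂ) - if 0 < lam i then (1 : ℂ) else 0)
        = fun i => if 0 < lam i then (0 : ℂ) else 1 := by
      funext i
      split <;> ring
    rw [hT₀def]
    conv_lhs => rw [hone]
    rw [← Matrix.sub_mul, ← Matrix.mul_sub, Matrix.diagonal_sub, hfun]
  have hT₀psd1 : (1 - T₀).PosSemidef := by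
    rw [hsub]
    refine (posSemidef_diagonal_iff.mpr fun i => ?_).mul_mul_conjTranspose_same _
    split <;> simp
  have hT₀tr : (((A - B) * T₀).trace).re = ∑ i, max (lam i) 0 := by
    have : ((A - B) * T₀).trace
        = ∑ i, ((lam i : ℝ) : ℂ) * (if 0 < lam i then (1 : ℂ) else 0) := by
      conv_lhs => rw [key]
      rw [hT₀def, unitary_conj_mul, diagonal_mul_diagonal, trace_unitary_conj, trace_diagonal]
    rw [this, Complex.re_sum]
    refine Finset.sum_congr rfl fun i _ => ?_
    rcases le_or_gt (lam i) 0 with h | h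
    · rw [if_neg (not_lt.mpr h), max_eq_right h]; simp
    · rw [if_pos h, max_eq_left h.le]; simp
  -- compute the infimum
  set x₀ : ℝ := (A.trace).re - ∑ i, max (lam i) 0 with hx₀
  have hmem : x₀ ∈ {x : ℝ | ∃ T : Matrix n n ℂ, T.PosSemidef ∧ (1 - T).PosSemidef ∧
      x = ((A * (1 - T) + B * T).trace).re} := by
    refine ⟨T₀, hT₀psd, hT₀psd1, ?_⟩
    rw [halg T₀, Complex.sub_re, hx₀, hT₀tr]
  have hlb : ∀ x ∈ {x : ℝ | ∃ T : Matrix n n ℂ, T.PosSemidef ∧ (1 - T).PosSemidef ∧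
      x = ((A * (1 - T) + B * T).trace).re}, x₀ ≤ x := by
    rintro x ⟨T, hT, hT1, rfl⟩
    rw [halg T, Complex.sub_re, hx₀]
    have := hbound T hT hT1
    linarith
  have hinf : trMin A B = x₀ := by
    rw [trMin]
    exact le_antisymm (csInf_le ⟨x₀, hlb⟩ hmem) (le_csInf ⟨x₀, hmem⟩ hlb)
  -- final arithmetic
  have htrC : (A.trace).re - (B.trace).re = ∑ i, lam i := by
    have h1 : (A - B).trace = ∑ i, ((lam i : ℝ) : ℂ) := by
      conv_lhs => rw [key]
      rw [trace_unitary_conj, trace_diagonal]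
    have h2 : (A - B).trace = A.trace - B.trace := trace_sub A B
    have := h1.symm.trans h2
    have := congrArg Complex.re this
    rw [Complex.sub_re, Complex.re_sum] at this
    simpa using this.symm
  have hTN : traceNorm (A - B) = ∑ i, |lam i| := traceNorm_herm (A - B) hC
  have hmax : ∑ i, max (lam i) 0 = ((∑ i, lam i) + ∑ i, |lam i|) / 2 := by
    rw [← Finset.sum_add_distrib, Finset.sum_div]
    refine Finset.sum_congr rfl fun i _ => ?_
    rcases le_or_gt 0 (lam i) with h | h
    · rw [max_eq_left h, abs_of_nonneg h]; ring
    · rw [max_eq_right h.le, abs_of_neg h]; ring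
  rw [hinf, hx₀, hTN, hmax]
  linarith
end

section
/- For any positive semi-definite matrices A and B with A + B invertible, Tr[A ∧ B] ≥ Tr[A (A+B)^{-1/2} B (A+B)^{-1/2}], where Tr[A ∧ B] := inf_{0≤T≤1} Tr[A(1−T) + BT]. -/
open Matrix BigOperators ComplexOrder

section helpers
variable {n : Type*} [Fintype n] [DecidableEq n]

lemma my_trace_re_nonneg {P : Matrix n n ℂ} (hP : P.PosSemidef) : 0 ≤ P.trace.re := by
  rw [Matrix.trace, Complex.re_sum]
  refine Finset.sum_nonneg fun i _ => ?_
  simpa [Matrix.mulVec_single, dotProduct, Pi.single_apply] using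
    hP.re_dotProduct_nonneg (Pi.single i 1)

lemma mpow_isHermitian {C : Matrix n n ℂ} (h : C.IsHermitian) (r : ℝ) :
    (mpow C r).IsHermitian := by
  rw [mpow, dif_pos h]
  unfold Matrix.IsHermitian
  simp only [Matrix.conjTranspose_mul, Matrix.diagonal_conjTranspose,
    Matrix.conjTranspose_conjTranspose, Matrix.star_eq_conjTranspose, Matrix.mul_assoc]
  rw [show (star fun i => ((h.eigenvalues i ^ r : ℝ) : ℂ)) =
      fun i => ((h.eigenvalues i ^ r : ℝ) : ℂ) from funext fun i => by simp]

lemma mpow_add {C : Matrix n n ℂ} (hC : C.PosDef) (r s : ℝ) :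
    mpow C r * mpow C s = mpow C (r + s) := by
  have h := hC.1
  rw [mpow, dif_pos h, mpow, dif_pos h, mpow, dif_pos h]
  have hU : star (h.eigenvectorUnitary : Matrix n n ℂ) * (h.eigenvectorUnitary : Matrix n n ℂ) = 1 :=
    Matrix.mem_unitaryGroup_iff'.mp h.eigenvectorUnitary.2
  simp only [Matrix.mul_assoc]
  rw [← Matrix.mul_assoc (star (h.eigenvectorUnitary : Matrix n n ℂ))
    (h.eigenvectorUnitary : Matrix n n ℂ), hU, one_mul,
    ← Matrix.mul_assoc (Matrix.diagonal (fun i => ((h.eigenvalues i ^ r : ℝ) : ℂ))),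
    Matrix.diagonal_mul_diagonal]
  rw [show (fun i => ((h.eigenvalues i ^ r : ℝ) : ℂ) * ((h.eigenvalues i ^ s : ℝ) : ℂ)) =
      fun i => ((h.eigenvalues i ^ (r + s) : ℝ) : ℂ) from funext fun i => by
    rw [← Complex.ofReal_mul, ← Real.rpow_add (hC.eigenvalues_pos i)]]

lemma mpow_zero {C : Matrix n n ℂ} (h : C.IsHermitian) : mpow C 0 = 1 := by
  rw [mpow, dif_pos h]
  simp [Real.rpow_zero, Matrix.mem_unitaryGroup_iff.mp h.eigenvectorUnitary.2]

lemma mpow_one {C : Matrix n n ℂ} (h : C.IsHermitian) : mpow C 1 = C := by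
  rw [mpow, dif_pos h]
  simp only [Real.rpow_one]
  exact (h.spectral_theorem).symm

open scoped MatrixOrder in
lemma trace_mul_re_nonneg {P Q : Matrix n n ℂ} (hP : P.PosSemidef) (hQ : Q.PosSemidef) :
    0 ≤ ((P * Q).trace).re := by
  have h1 : P * Q = (P * CFC.sqrt Q) * CFC.sqrt Q := by
    rw [Matrix.mul_assoc, ← pow_two, CFC.sq_sqrt Q hQ.nonneg]
  rw [h1, Matrix.trace_mul_comm]
  apply my_trace_re_nonneg
  have h2 := hP.conjTranspose_mul_mul_same (CFC.sqrt Q)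
  rwa [(CFC.sqrt_nonneg Q).posSemidef.1, Matrix.mul_assoc] at h2

end helpers

/-- Lower bound: `Tr[A ∧ B] ≥ Tr[A (A+B)^{-1/2} B (A+B)^{-1/2}]` when `A+B` is invertible. -/
theorem trMin_ge_trace_quotient {n : Type*} [Fintype n] [DecidableEq n]
    (A B : Matrix n n ℂ) (hA : A.PosSemidef) (hB : B.PosSemidef)
    (hAB : (A + B).PosDef) :
    ((A * mpow (A + B) (-(1 / 2)) * B * mpow (A + B) (-(1 / 2))).trace).re ≤ trMin A B := by
  set C : Matrix n n ℂ := A + B with hCdef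
  have h1 : C.IsHermitian := hAB.1
  set S : Matrix n n ℂ := mpow C (-(1 / 2)) with hSdef
  set N : Matrix n n ℂ := mpow C (-(1 / 4)) with hNdef
  set q : Matrix n n ℂ := mpow C (1 / 4) with hqdef
  set c : Matrix n n ℂ := mpow C (1 / 2) with hcdef
  have hNN : N * N = S := by rw [hNdef, hSdef, mpow_add hAB]; norm_num
  have hNq : N * q = 1 := by rw [hNdef, hqdef, mpow_add hAB]; norm_num; exact mpow_zero h1
  have hqN : q * N = 1 := by rw [hNdef, hqdef, mpow_add hAB]; norm_num; exact mpow_zero h1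
  have hqq : q * q = c := by rw [hqdef, hcdef, mpow_add hAB]; norm_num
  have hSc : S * c = 1 := by rw [hSdef, hcdef, mpow_add hAB]; norm_num; exact mpow_zero h1
  have hcS : c * S = 1 := by rw [hSdef, hcdef, mpow_add hAB]; norm_num; exact mpow_zero h1
  have hcc : c * c = C := by rw [hcdef, mpow_add hAB]; norm_num; exact mpow_one h1
  have hqH : qᴴ = q := mpow_isHermitian h1 _
  have hNH : Nᴴ = N := mpow_isHermitian h1 _
  have hcH : cᴴ = c := mpow_isHermitian h1 _
  -- unfold to le_csInf
  rw [trMin]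
  apply le_csInf
  · exact ⟨_, 0, Matrix.PosSemidef.zero, by simpa using (Matrix.PosSemidef.one :
      (1 : Matrix n n ℂ).PosSemidef), rfl⟩
  rintro x ⟨T, hT, hT1, rfl⟩
  set Z : Matrix n n ℂ := N * A * N with hZdef
  set W : Matrix n n ℂ := q * T * q with hWdef
  have hZH : Zᴴ = Z := by
    rw [hZdef, Matrix.conjTranspose_mul, Matrix.conjTranspose_mul, hNH, hA.1, Matrix.mul_assoc]
  have hWH : Wᴴ = W := by
    rw [hWdef, Matrix.conjTranspose_mul, Matrix.conjTranspose_mul, hqH, hT.1, Matrix.mul_assoc]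
  have hBeq : B = C - A := by rw [hCdef]; abel
  have hSCS : S * C * S = 1 := by
    rw [← hcc, ← Matrix.mul_assoc, hSc, one_mul, hcS]
  -- e2
  have e2 : (A * S * B * S).trace = A.trace - (A * S * A * S).trace := by
    have h : A * S * B * S = A * (S * C * S) - A * S * A * S := by
      rw [hBeq]; noncomm_ring
    rw [h, hSCS, mul_one, Matrix.trace_sub]
  -- e1
  have e1 : (A * (1 - T) + B * T).trace =
      A.trace + (C * T).trace - ((A * T).trace + (A * T).trace) := by
    have h : A * (1 - T) + B * T = A + C * T - (A * T + A * T) := by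
      rw [hBeq]; noncomm_ring
    rw [h, Matrix.trace_sub, Matrix.trace_add, Matrix.trace_add]
  -- trace (Z * W) = trace (A * T)
  have eZW : (Z * W).trace = (A * T).trace := by
    rw [hZdef, hWdef]
    simp only [Matrix.mul_assoc]
    rw [← Matrix.mul_assoc N q, hNq, one_mul, Matrix.trace_mul_comm N]
    simp only [Matrix.mul_assoc]
    rw [hqN, Matrix.mul_one]
  -- trace (Z * Z) = trace (A * S * A * S)
  have eZZ : (Z * Z).trace = (A * S * A * S).trace := by
    rw [hZdef]
    simp only [Matrix.mul_assoc]
    rw [← Matrix.mul_assoc N N, hNN, Matrix.trace_mul_comm N]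
    simp only [Matrix.mul_assoc]
    rw [hNN]
  -- trace (W * W) = trace (T * c * T * c)
  have eWW : (W * W).trace = (T * c * T * c).trace := by
    rw [hWdef]
    simp only [Matrix.mul_assoc]
    rw [← Matrix.mul_assoc q q, hqq, Matrix.trace_mul_comm q]
    simp only [Matrix.mul_assoc]
    rw [hqq]
  -- e3
  have e3 : ((W - Z)ᴴ * (W - Z)).trace =
      (W * W).trace - ((A * T).trace + (A * T).trace) + (A * S * A * S).trace := by
    have h : (W - Z)ᴴ * (W - Z) = W * W - (Z * W + W * Z) + Z * Z := by
      rw [Matrix.conjTranspose_sub, hZH, hWH]; noncomm_ring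
    rw [h, Matrix.trace_add, Matrix.trace_sub, Matrix.trace_add, eZZ,
      Matrix.trace_mul_comm W Z, eZW]
  -- e4
  have e4 : ((1 - T) * (c * T * c)).trace = (C * T).trace - (W * W).trace := by
    have h : (1 - T) * (c * T * c) = c * T * c - T * (c * T * c) := by noncomm_ring
    rw [h, Matrix.trace_sub, eWW]
    have h5 : (c * T * c).trace = (C * T).trace := by
      rw [Matrix.trace_mul_comm, ← Matrix.mul_assoc, hcc]
    have h6 : (T * (c * T * c)).trace = (T * c * T * c).trace := by
      simp only [Matrix.mul_assoc]
    rw [h5, h6]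
  -- combine
  have E : (A * (1 - T) + B * T).trace = (A * S * B * S).trace
      + ((W - Z)ᴴ * (W - Z)).trace + ((1 - T) * (c * T * c)).trace := by
    rw [e1, e2, e3, e4]; ring
  have hre : ((A * (1 - T) + B * T).trace).re = ((A * S * B * S).trace).re
      + (((W - Z)ᴴ * (W - Z)).trace).re + (((1 - T) * (c * T * c)).trace).re := by
    rw [E, Complex.add_re, Complex.add_re]
  have p1 : 0 ≤ (((W - Z)ᴴ * (W - Z)).trace).re :=
    my_trace_re_nonneg (Matrix.posSemidef_conjTranspose_mul_self _)
  have hM : (c * T * c).PosSemidef := by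
    have := hT.mul_mul_conjTranspose_same c
    rwa [hcH] at this
  have p2 : 0 ≤ (((1 - T) * (c * T * c)).trace).re := trace_mul_re_nonneg hT1 hM
  linarith [hre]
end

section
/- For any positive trace-preserving linear map N and positive semi-definite matrices A, B, one has Tr[A ∧ B] ≤ Tr[N(A) ∧ N(B)], where Tr[X ∧ Y] := inf_{0≤T≤1} Tr[X(1−T) + YT]. -/
open Matrix BigOperators ComplexOrder

section AuxLemmas

open Matrix

lemma aux_trace_conjTranspose_mul_self_nonneg {k l : Type*} [Fintype k] [Fintype l]
    (M : Matrix k l ℂ) : 0 ≤ (Mᴴ * M).trace := by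
  rw [Matrix.trace]
  refine Finset.sum_nonneg fun j _ => ?_
  rw [Matrix.diag_apply, Matrix.mul_apply]
  refine Finset.sum_nonneg fun i _ => ?_
  simpa [Matrix.conjTranspose_apply] using star_mul_self_nonneg (M i j)

lemma aux_trace_mul_psd_nonneg {k : Type*} [Fintype k] [DecidableEq k]
    {P Q : Matrix k k ℂ} (hP : P.PosSemidef) (hQ : Q.PosSemidef) :
    0 ≤ (P * Q).trace := by
  open scoped MatrixOrder Matrix.Norms.L2Operator in
  obtain ⟨B, hB⟩ := CStarAlgebra.nonneg_iff_eq_star_mul_self.mp hP.nonneg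
  open scoped MatrixOrder Matrix.Norms.L2Operator in
  obtain ⟨C, hC⟩ := CStarAlgebra.nonneg_iff_eq_star_mul_self.mp hQ.nonneg
  rw [Matrix.star_eq_conjTranspose] at hB hC
  subst hB hC
  have h : Bᴴ * B * (Cᴴ * C) = (Bᴴ * (B * Cᴴ)) * C := by noncomm_ring
  have h2 : C * (Bᴴ * (B * Cᴴ)) = (B * Cᴴ)ᴴ * (B * Cᴴ) := by
    rw [Matrix.conjTranspose_mul, Matrix.conjTranspose_conjTranspose]; noncomm_ring
  rw [h, Matrix.trace_mul_comm, h2]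
  exact aux_trace_conjTranspose_mul_self_nonneg _

lemma aux_vecMulVec_posSemidef {k : Type*} [Fintype k] [DecidableEq k] (v : k → ℂ) :
    (Matrix.vecMulVec v (star v)).PosSemidef := by
  rw [Matrix.vecMulVec_eq Unit, ← Matrix.conjTranspose_replicateCol]
  exact Matrix.posSemidef_self_mul_conjTranspose _

lemma aux_herm_decomp {k : Type*} [Fintype k] [DecidableEq k]
    {H : Matrix k k ℂ} (hH : H.IsHermitian) :
    ∃ P Q : Matrix k k ℂ, P.PosSemidef ∧ Q.PosSemidef ∧ H = P - Q := by
  set U : Matrix k k ℂ := (hH.eigenvectorUnitary : Matrix k k ℂ) with hU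
  have hpsd : ∀ d : k → ℝ, (∀ i, 0 ≤ d i) →
      (U * Matrix.diagonal (fun i => (d i : ℂ)) * star U).PosSemidef := by
    intro d hd
    rw [Matrix.star_eq_conjTranspose]
    exact (Matrix.posSemidef_diagonal_iff.mpr fun i =>
      Complex.zero_le_real.mpr (hd i)).mul_mul_conjTranspose_same U
  refine ⟨_, _, hpsd (fun i => max (hH.eigenvalues i) 0) (fun i => le_max_right _ _),
    hpsd (fun i => max (-hH.eigenvalues i) 0) (fun i => le_max_right _ _), ?_⟩
  have hdiag : Matrix.diagonal (fun i => ((max (hH.eigenvalues i) 0 : ℝ) : ℂ))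
      - Matrix.diagonal (fun i => ((max (-hH.eigenvalues i) 0 : ℝ) : ℂ))
      = Matrix.diagonal (RCLike.ofReal ∘ hH.eigenvalues) := by
    ext i j
    rcases eq_or_ne i j with h | h
    · subst h
      simp only [Matrix.sub_apply, Matrix.diagonal_apply_eq, Function.comp_apply]
      rw [← Complex.ofReal_sub, max_zero_sub_max_neg_zero_eq_self]
      rfl
    · simp [Matrix.diagonal_apply_ne _ h]
  conv_lhs => rw [hH.spectral_theorem, Unitary.conjStarAlgAut_apply]
  rw [← hdiag, Matrix.mul_sub, Matrix.sub_mul]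

section NAux

variable {n m : Type*} [Fintype n] [DecidableEq n] [Fintype m] [DecidableEq m]
  (N : Matrix n n ℂ →ₗ[ℂ] Matrix m m ℂ)

lemma aux_map_isHermitian (hNpos : ∀ X : Matrix n n ℂ, X.PosSemidef → (N X).PosSemidef)
    {H : Matrix n n ℂ} (hH : H.IsHermitian) : (N H).IsHermitian := by
  obtain ⟨P, Q, hP, hQ, rfl⟩ := aux_herm_decomp hH
  rw [map_sub]
  exact ((hNpos P hP).1).sub ((hNpos Q hQ).1)

lemma aux_map_conjTranspose (hNpos : ∀ X : Matrix n n ℂ, X.PosSemidef → (N X).PosSemidef)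
    (X : Matrix n n ℂ) : N Xᴴ = (N X)ᴴ := by
  have hH : (X + Xᴴ).IsHermitian := Matrix.isHermitian_add_transpose_self X
  have hK : (Complex.I • (X - Xᴴ)).IsHermitian := by
    ext i j
    simp [Matrix.conjTranspose_apply, Matrix.smul_apply, Matrix.sub_apply, Complex.conj_I,
      mul_comm]
    ring
  have hNH := (aux_map_isHermitian N hNpos hH).eq
  have hNK := (aux_map_isHermitian N hNpos hK).eq
  have hX : Xᴴ = (2 : ℂ)⁻¹ • ((X + Xᴴ) + Complex.I • (Complex.I • (X - Xᴴ))) := by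
    rw [smul_smul, Complex.I_mul_I]
    ext i j; simp; ring
  have hX' : X = (2 : ℂ)⁻¹ • ((X + Xᴴ) - Complex.I • (Complex.I • (X - Xᴴ))) := by
    rw [smul_smul, Complex.I_mul_I]
    ext i j; simp; ring
  rw [hX, _root_.map_smul, map_add, _root_.map_smul]
  conv_rhs => rw [hX', _root_.map_smul, map_sub, _root_.map_smul]
  rw [Matrix.conjTranspose_smul, Matrix.conjTranspose_sub, Matrix.conjTranspose_smul,
    hNH, hNK]
  simp [Complex.star_def, Complex.conj_I, sub_eq_add_neg]
  abel

end NAux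

end AuxLemmas

/-- Monotone increase of the noncommutative minimal under positive
trace-preserving linear maps. -/
theorem trMin_le_trMin_map {n m : Type*} [Fintype n] [DecidableEq n]
    [Fintype m] [DecidableEq m]
    (N : Matrix n n ℂ →ₗ[ℂ] Matrix m m ℂ)
    (hNpos : ∀ X : Matrix n n ℂ, X.PosSemidef → (N X).PosSemidef)
    (hNtr : ∀ X : Matrix n n ℂ, (N X).trace = X.trace)
    (A B : Matrix n n ℂ) (hA : A.PosSemidef) (hB : B.PosSemidef) :
    trMin A B ≤ trMin (N A) (N B) := by
  classical
  set Nd : Matrix m m ℂ → Matrix n n ℂ :=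
    fun S => Matrix.of (fun a b => (N (Matrix.single b a 1) * S).trace) with hNd
  have hstdT : ∀ a b : n, (Matrix.single a b (1 : ℂ))ᴴ = Matrix.single b a 1 := by
    intro a b
    ext i j
    simp [Matrix.single, Matrix.conjTranspose_apply, and_comm, apply_ite (star ·)]
  have hkey : ∀ (X : Matrix n n ℂ) (S : Matrix m m ℂ),
      (X * Nd S).trace = (N X * S).trace := by
    intro X S
    have hX : N X = ∑ a : n, ∑ b : n, X a b • N (Matrix.single a b 1) := by
      conv_lhs => rw [Matrix.matrix_eq_sum_single X]
      rw [map_sum]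
      refine Finset.sum_congr rfl fun a _ => ?_
      rw [map_sum]
      refine Finset.sum_congr rfl fun b _ => ?_
      rw [← _root_.map_smul, Matrix.smul_single, smul_eq_mul, mul_one]
    have lhs : (X * Nd S).trace
        = ∑ a : n, ∑ b : n, X a b * (N (Matrix.single a b 1) * S).trace := by
      rw [Matrix.trace]
      simp only [Matrix.diag_apply, Matrix.mul_apply, hNd, Matrix.of_apply]
    rw [lhs, hX, Finset.sum_mul, Matrix.trace_sum]
    refine Finset.sum_congr rfl fun a _ => ?_
    rw [Finset.sum_mul, Matrix.trace_sum]
    refine Finset.sum_congr rfl fun b _ => ?_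
    rw [Matrix.smul_mul, Matrix.trace_smul, smul_eq_mul]
  have hNd1 : Nd 1 = 1 := by
    ext a b
    simp only [hNd, Matrix.of_apply, Matrix.mul_one]
    rw [hNtr]
    by_cases h : a = b
    · subst h
      rw [Matrix.trace_single_eq_same, Matrix.one_apply_eq]
    · rw [Matrix.trace_single_eq_of_ne b a 1 (Ne.symm h), Matrix.one_apply_ne h]
  have hNdsub : ∀ S₁ S₂ : Matrix m m ℂ, Nd (S₁ - S₂) = Nd S₁ - Nd S₂ := by
    intro S₁ S₂
    ext a b
    simp [hNd, Matrix.mul_sub, Matrix.trace_sub]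
  have hNdpsd : ∀ S : Matrix m m ℂ, S.PosSemidef → (Nd S).PosSemidef := by
    intro S hS
    refine Matrix.posSemidef_iff_dotProduct_mulVec.mpr ⟨?_, ?_⟩
    · ext a b
      simp only [Matrix.conjTranspose_apply, hNd, Matrix.of_apply]
      rw [← Matrix.trace_conjTranspose, Matrix.conjTranspose_mul, hS.1.eq,
        ← aux_map_conjTranspose N hNpos, hstdT, Matrix.trace_mul_comm]
    · intro x
      have hquad : dotProduct (star x) ((Nd S) *ᵥ x)
          = ((Matrix.vecMulVec x (star x)) * Nd S).trace := by
        rw [Matrix.trace]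
        simp only [Matrix.diag_apply, Matrix.mul_apply, Matrix.vecMulVec_apply,
          dotProduct, Matrix.mulVec, Pi.star_apply]
        rw [Finset.sum_comm]
        refine Finset.sum_congr rfl fun a _ => ?_
        rw [Finset.mul_sum]
        refine Finset.sum_congr rfl fun b _ => ?_
        ring
      rw [hquad, hkey]
      exact aux_trace_mul_psd_nonneg (hNpos _ (aux_vecMulVec_posSemidef x)) hS
  rw [trMin, trMin]
  refine le_csInf ⟨_, 0, Matrix.PosSemidef.zero, by
      rw [sub_zero]; exact Matrix.PosDef.one.posSemidef, rfl⟩ ?_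
  rintro x ⟨T', hT', hT'1, rfl⟩
  refine csInf_le ⟨0, ?_⟩ ?_
  · rintro y ⟨T, hT, hT1, rfl⟩
    rw [Matrix.trace_add, Complex.add_re]
    have h1 := (Complex.le_def.mp (aux_trace_mul_psd_nonneg hA hT1)).1
    have h2 := (Complex.le_def.mp (aux_trace_mul_psd_nonneg hB hT)).1
    simp only [Complex.zero_re] at h1 h2
    positivity
  · refine ⟨Nd T', hNdpsd T' hT', ?_, ?_⟩
    · have h : (1 : Matrix n n ℂ) - Nd T' = Nd (1 - T') := by rw [hNdsub, hNd1]
      rw [h]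
      exact hNdpsd _ hT'1
    · congr 1
      rw [Matrix.mul_sub, Matrix.mul_sub, Matrix.mul_one, Matrix.mul_one,
        Matrix.trace_add, Matrix.trace_add, Matrix.trace_sub, Matrix.trace_sub,
        hkey A T', hkey B T', hNtr A]
end

section
/- Pinching inequality: let H be a self-adjoint matrix with spectral projections e_1,…,e_k onto its k distinct eigenvalues, and let P_H(L) := Σ_i e_i L e_i be the pinching map. Then for every positive semi-definite L, P_H(L) ≥ L/k in the Loewner order. -/
open Matrix BigOperators ComplexOrder

private lemma normSq_sum_le' {k : ℕ} (c : Fin k → ℂ) :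
    Complex.normSq (∑ i, c i) ≤ (k : ℝ) * ∑ i, Complex.normSq (c i) := by
  have h1 : Complex.normSq (∑ i, c i) ≤ (∑ i, ‖c i‖) ^ 2 := by
    rw [Complex.normSq_eq_norm_sq]
    apply pow_le_pow_left₀ (norm_nonneg _)
    simpa using (norm_sum_le Finset.univ c)
  have h2 : (∑ i, ‖c i‖) ^ 2 ≤
      ((Finset.univ : Finset (Fin k)).card : ℝ) * ∑ i, ‖c i‖ ^ 2 :=
    sq_sum_le_card_mul_sum_sq
  simp only [Finset.card_univ, Fintype.card_fin] at h2
  calc Complex.normSq (∑ i, c i) ≤ (∑ i, ‖c i‖) ^ 2 := h1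
    _ ≤ (k : ℝ) * ∑ i, ‖c i‖ ^ 2 := h2
    _ = (k : ℝ) * ∑ i, Complex.normSq (c i) := by simp [Complex.sq_norm]

private lemma dot_self_eq_normSq {n : Type*} [Fintype n] (v : n → ℂ) :
    dotProduct (star v) v = ((∑ j, Complex.normSq (v j) : ℝ) : ℂ) := by
  simp only [dotProduct, Pi.star_apply, Complex.ofReal_sum]
  refine Finset.sum_congr rfl fun j _ => ?_
  rw [Complex.star_def, mul_comm, Complex.mul_conj]

private lemma dot_sum_right {n : Type*} [Fintype n] {k : ℕ}
    (v : n → ℂ) (w : Fin k → n → ℂ) :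
    dotProduct v (∑ i, w i) = ∑ i, dotProduct v (w i) := by
  simp [dotProduct, Finset.mul_sum]
  exact Finset.sum_comm

private lemma sum_mulVec' {n : Type*} [Fintype n] {k : ℕ}
    (A : Fin k → Matrix n n ℂ) (v : n → ℂ) :
    (∑ i, A i) *ᵥ v = ∑ i, (A i) *ᵥ v := by
  ext j
  simp only [Matrix.mulVec, dotProduct, Matrix.sum_apply, Finset.sum_apply, Finset.sum_mul]
  exact Finset.sum_comm

private lemma mulVec_sum' {n : Type*} [Fintype n] {k : ℕ}
    (A : Matrix n n ℂ) (w : Fin k → n → ℂ) :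
    A *ᵥ (∑ i, w i) = ∑ i, A *ᵥ w i := by
  ext j
  simp only [Matrix.mulVec, dotProduct, Finset.sum_apply, Finset.mul_sum]
  exact Finset.sum_comm


/-- Pinching inequality: if `e₁, …, e_k` are the spectral projections of a Hermitian
matrix `H` onto its `k` distinct eigenvalues, then for every positive semi-definite `L`,
`∑ᵢ eᵢ L eᵢ ≥ L / k` in the Loewner order. -/
theorem pinching_inequality {n : Type*} [Fintype n] [DecidableEq n]
    (H L : Matrix n n ℂ) (hH : H.IsHermitian) (hL : L.PosSemidef)
    (k : ℕ) (hk : 0 < k) (e : Fin k → Matrix n n ℂ) (ev : Fin k → ℝ)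
    (hinj : Function.Injective ev)
    (hherm : ∀ i, (e i).IsHermitian)
    (hidem : ∀ i, e i * e i = e i)
    (hne : ∀ i, e i ≠ 0)
    (horth : ∀ i j, i ≠ j → e i * e j = 0)
    (hsum : ∑ i, e i = 1)
    (hspec : H = ∑ i, ((ev i : ℝ) : ℂ) • e i) :
    ((∑ i, e i * L * e i) - (((k : ℝ)⁻¹ : ℝ) : ℂ) • L).PosSemidef := by
  classical
  obtain ⟨B, hB⟩ : ∃ B : Matrix n n ℂ, L = Bᴴ * B := by
    open scoped MatrixOrder Matrix.Norms.L2Operator in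
    exact CStarAlgebra.nonneg_iff_eq_star_mul_self.mp hL.nonneg
  rw [Matrix.posSemidef_iff_dotProduct_mulVec]
  constructor
  · -- Hermitian part
    have hLh := hL.1
    unfold Matrix.IsHermitian at *
    simp only [Matrix.conjTranspose_sub, Matrix.conjTranspose_sum,
      Matrix.conjTranspose_smul, Matrix.conjTranspose_mul, hLh]
    congr 1
    · refine Finset.sum_congr rfl fun i _ => ?_
      rw [hherm i, mul_assoc]
    · congr 1
      simp [Complex.star_def, Complex.conj_ofReal]
  · intro x
    set y : Fin k → (n → ℂ) := fun i => (e i) *ᵥ x with hy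
    set z : Fin k → (n → ℂ) := fun i => B *ᵥ y i with hz
    have hxz : B *ᵥ x = ∑ i, z i := by
      have h1 : (∑ i, e i) *ᵥ x = x := by rw [hsum, Matrix.one_mulVec]
      rw [sum_mulVec'] at h1
      simp only [hz, hy]
      rw [← mulVec_sum', h1]
    have hquad : ∀ u : n → ℂ, dotProduct (star u) (L *ᵥ u)
        = dotProduct (star (B *ᵥ u)) (B *ᵥ u) := by
      intro u
      rw [hB, ← Matrix.mulVec_mulVec, Matrix.dotProduct_mulVec, ← Matrix.star_mulVec]
    have hterm : ∀ i, dotProduct (star x) ((e i * L * e i) *ᵥ x)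
        = dotProduct (star (z i)) (z i) := by
      intro i
      rw [← Matrix.mulVec_mulVec, ← Matrix.mulVec_mulVec,
        Matrix.dotProduct_mulVec (star x) (e i)]
      have hs : star x ᵥ* e i = star (y i) := by
        rw [hy]; simp only [Matrix.star_mulVec, (hherm i).eq]
      rw [hs, hquad (y i)]
    -- rewrite the goal
    rw [Matrix.sub_mulVec, dotProduct_sub, sum_mulVec', dot_sum_right,
      Matrix.smul_mulVec, dotProduct_smul]
    have hL2 : dotProduct (star x) (L *ᵥ x)
        = ((∑ j, Complex.normSq ((∑ i, z i) j) : ℝ) : ℂ) := by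
      rw [hquad x, hxz, dot_self_eq_normSq]
    calc (0 : ℂ)
        ≤ ((∑ i, ∑ j, Complex.normSq (z i j))
            - (k : ℝ)⁻¹ * (∑ j, Complex.normSq ((∑ i, z i) j)) : ℝ) := by
          rw [Complex.zero_le_real, sub_nonneg]
          rw [inv_mul_le_iff₀ (by exact_mod_cast hk)]
          calc (∑ j, Complex.normSq ((∑ i, z i) j))
              = ∑ j, Complex.normSq (∑ i, z i j) := by
                refine Finset.sum_congr rfl fun j _ => ?_
                simp [Finset.sum_apply]
            _ ≤ ∑ j, (k : ℝ) * ∑ i, Complex.normSq (z i j) := by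
                exact Finset.sum_le_sum fun j _ => normSq_sum_le' _
            _ = (k : ℝ) * ∑ i, ∑ j, Complex.normSq (z i j) := by
                rw [← Finset.mul_sum]
                rw [Finset.sum_comm]
      _ = ∑ i, dotProduct (star x) ((e i * L * e i) *ᵥ x)
            - (((k : ℝ)⁻¹ : ℝ) : ℂ) • dotProduct (star x) (L *ᵥ x) := by
          rw [hL2]
          simp only [hterm, dot_self_eq_normSq, smul_eq_mul]
          push_cast
          ring
end

section
/- For a self-adjoint operator H on a d-dimensional Hilbert space and any n ∈ ℕ, the number of distinct eigenvalues of the n-fold tensor power H^{⊗n} is at most (n+1)^{d−1}. -/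
open Matrix BigOperators ComplexOrder

section AuxSpectrumTpow

variable {ι : Type*} [Fintype ι] [DecidableEq ι]

omit [DecidableEq ι] in
lemma aux_tpow_mul (A B : Matrix ι ι ℂ) (n : ℕ) :
    tpow (A * B) n = tpow A n * tpow B n := by
  ext f g
  simp only [tpow, Matrix.mul_apply]
  rw [Finset.prod_univ_sum]
  simp [Fintype.piFinset_univ, Finset.prod_mul_distrib]

lemma aux_tpow_one (n : ℕ) : tpow (1 : Matrix ι ι ℂ) n = 1 := by
  ext f g
  simp [tpow, Matrix.one_apply, Finset.prod_boole, funext_iff]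

lemma aux_tpow_diagonal (v : ι → ℂ) (n : ℕ) :
    tpow (Matrix.diagonal v) n = Matrix.diagonal (fun f : Fin n → ι => ∏ m, v (f m)) := by
  ext f g
  by_cases h : f = g
  · subst h; simp [tpow, Matrix.diagonal_apply_eq]
  · rw [Matrix.diagonal_apply_ne _ h]
    obtain ⟨m, hm⟩ : ∃ m, f m ≠ g m := by
      by_contra hc; push_neg at hc; exact h (funext hc)
    exact Finset.prod_eq_zero (Finset.mem_univ m) (Matrix.diagonal_apply_ne v hm)

lemma aux_spectrum_tpow (H : Matrix ι ι ℂ) (hH : H.IsHermitian) (n : ℕ) :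
    spectrum ℂ (tpow H n) =
      Set.range (fun f : Fin n → ι => ∏ m, (hH.eigenvalues (f m) : ℂ)) := by
  set U : Matrix ι ι ℂ := (hH.eigenvectorUnitary : Matrix ι ι ℂ) with hU
  have hUU : U * star U = 1 := Matrix.mem_unitaryGroup_iff.mp hH.eigenvectorUnitary.2
  have hUU' : star U * U = 1 := Matrix.mem_unitaryGroup_iff'.mp hH.eigenvectorUnitary.2
  set u : (Matrix (Fin n → ι) (Fin n → ι) ℂ)ˣ :=
    ⟨tpow U n, tpow (star U) n, by rw [← aux_tpow_mul, hUU, aux_tpow_one],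
      by rw [← aux_tpow_mul, hUU', aux_tpow_one]⟩ with hu
  have key : tpow H n = u * tpow (Matrix.diagonal (RCLike.ofReal ∘ hH.eigenvalues)) n * u⁻¹ := by
    conv_lhs => rw [hH.spectral_theorem]
    rw [Unitary.conjStarAlgAut_apply]
    rw [aux_tpow_mul, aux_tpow_mul]
    rfl
  rw [key, spectrum.units_conjugate, aux_tpow_diagonal, spectrum_diagonal]
  rfl

lemma aux_ncard_range_prod_le (μ : ι → ℂ) (n : ℕ) :
    (Set.range (fun f : Fin n → ι => ∏ m, μ (f m))).ncard
      ≤ (n + 1) ^ (Fintype.card ι - 1) := by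
  rcases isEmpty_or_nonempty ι with hι | hι
  · have hsub : Set.range (fun f : Fin n → ι => ∏ m, μ (f m)) ⊆ {1} := by
      rintro x ⟨f, rfl⟩
      have : IsEmpty (Fin n) := ⟨fun m => (hι.false (f m)).elim⟩
      simp
    calc (Set.range _).ncard ≤ ({1} : Set ℂ).ncard :=
          Set.ncard_le_ncard hsub (Set.finite_singleton 1)
      _ = 1 := Set.ncard_singleton 1
      _ ≤ _ := Nat.one_le_pow _ _ (Nat.succ_pos n)
  · obtain ⟨i₀⟩ := hι
    set c : (Fin n → ι) → ι → ℕ := fun f i => (Finset.univ.filter fun m => f m = i).card with hc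
    have hclt : ∀ f i, c f i < n + 1 := fun f i =>
      Nat.lt_succ_of_le (le_trans (Finset.card_filter_le _ _) (by simp))
    set e : (Fin n → ι) → ({i : ι // i ≠ i₀} → Fin (n + 1)) :=
      fun f i => ⟨c f i.1, hclt f i.1⟩ with he
    set Q : ({i : ι // i ≠ i₀} → Fin (n + 1)) → ℂ :=
      fun g => (∏ i : {i : ι // i ≠ i₀}, μ i.1 ^ (g i : ℕ)) *
        μ i₀ ^ (n - ∑ i : {i : ι // i ≠ i₀}, (g i : ℕ)) with hQ
    have hsum : ∀ f : Fin n → ι, ∑ i : ι, c f i = n := by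
      intro f
      have := Finset.card_eq_sum_card_fiberwise
        (f := f) (s := Finset.univ) (t := Finset.univ) (fun m _ => Finset.mem_univ _)
      simpa using this.symm
    have herase : ∀ f : Fin n → ι, ∀ F : ι → ℂ,
        ∏ i ∈ Finset.univ.erase i₀, F i = ∏ i : {i : ι // i ≠ i₀}, F i.1 := by
      intro f F
      rw [Finset.prod_subtype (p := fun x => x ≠ i₀) (Finset.univ.erase i₀) (fun x => by simp) F]
    have heraseN : ∀ f : Fin n → ι,
        ∑ i ∈ Finset.univ.erase i₀, c f i = ∑ i : {i : ι // i ≠ i₀}, c f i.1 := by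
      intro f
      rw [Finset.sum_subtype (p := fun x => x ≠ i₀) (Finset.univ.erase i₀) (fun x => by simp) (c f)]
    have hPQ : ∀ f : Fin n → ι, ∏ m, μ (f m) = Q (e f) := by
      intro f
      have h1 : ∏ m, μ (f m) = ∏ i : ι, μ i ^ c f i := by
        rw [← Finset.prod_fiberwise' Finset.univ f μ]
        exact Finset.prod_congr rfl fun i _ => Finset.prod_const _
      have h2 : ∑ i ∈ Finset.univ.erase i₀, c f i + c f i₀ = n := by
        rw [← hsum f, ← Finset.add_sum_erase _ _ (Finset.mem_univ i₀)]
        ring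
      have h3 : c f i₀ = n - ∑ i : {i : ι // i ≠ i₀}, c f i.1 := by
        rw [← heraseN f]; omega
      rw [h1, ← Finset.mul_prod_erase _ _ (Finset.mem_univ i₀), herase f, hQ]
      simp only [he]
      rw [← h3]
      ring
    have hsub : Set.range (fun f : Fin n → ι => ∏ m, μ (f m)) ⊆ Set.range Q := by
      rintro x ⟨f, rfl⟩
      exact ⟨e f, (hPQ f).symm⟩
    calc (Set.range _).ncard ≤ (Set.range Q).ncard :=
          Set.ncard_le_ncard hsub (Set.finite_range Q)
      _ ≤ Fintype.card ({i : ι // i ≠ i₀} → Fin (n + 1)) := by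
          rw [← Set.image_univ]
          refine le_trans (Set.ncard_image_le Set.finite_univ) ?_
          rw [Set.ncard_univ, Nat.card_eq_fintype_card]
      _ = (n + 1) ^ (Fintype.card ι - 1) := by
          have hcard : Fintype.card {i : ι // i ≠ i₀} = Fintype.card ι - 1 := by
            simp [Fintype.card_subtype_compl]
          rw [Fintype.card_fun, Fintype.card_fin, hcard]

end AuxSpectrumTpow

/-- The number of distinct eigenvalues of the `n`-fold tensor power of a self-adjoint
operator on a `d`-dimensional space is at most `(n+1)^{d−1}`. -/
theorem card_spectrum_tpow_le {ι : Type*} [Fintype ι] [DecidableEq ι]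
    (H : Matrix ι ι ℂ) (hH : H.IsHermitian) (n : ℕ) :
    (spectrum ℂ (tpow H n)).ncard ≤ (n + 1) ^ (Fintype.card ι - 1) := by
  rw [aux_spectrum_tpow H hH n]
  exact aux_ncard_range_prod_le (fun i => (hH.eigenvalues i : ℂ)) n
end

section
/- For positive definite matrices X and Y and any s ∈ [−1, 0), one has ((X+Y)/2)^s ≤ X^s # Y^s in the Loewner order, where X # Y := X^{1/2}(X^{−1/2} Y X^{−1/2})^{1/2} X^{1/2} is the operator geometric mean. -/
open Matrix BigOperators ComplexOrder

namespace AuxGM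

set_option linter.unusedSectionVars false
set_option linter.unusedVariables false

section
variable {n : Type*} [Fintype n] [DecidableEq n]

lemma contOn (f : ℝ → ℝ) (s : Set ℝ) (hs : s.Finite) : ContinuousOn f s := by
  haveI : Finite s := hs.to_subtype
  rw [continuousOn_iff_continuous_restrict]
  exact continuous_of_discreteTopology

lemma contOnSpec (f : ℝ → ℝ) (A : Matrix n n ℂ) : ContinuousOn f (spectrum ℝ A) :=
  contOn f _ A.finite_real_spectrum

lemma mpow_eq_cfc {A : Matrix n n ℂ} (hA : A.IsHermitian) (r : ℝ) :
    mpow A r = cfc (fun x : ℝ => x ^ r) A := by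
  rw [hA.cfc_eq, Matrix.IsHermitian.cfc, mpow, dif_pos hA]
  rfl

lemma spec_pos {A : Matrix n n ℂ} (hA : A.PosDef) : ∀ x ∈ spectrum ℝ A, 0 < x := by
  rw [hA.isHermitian.spectrum_real_eq_range_eigenvalues]
  rintro x ⟨i, rfl⟩
  exact hA.eigenvalues_pos i

lemma mpow_isHermitian {A : Matrix n n ℂ} (hA : A.IsHermitian) (r : ℝ) :
    (mpow A r).IsHermitian := by
  rw [mpow_eq_cfc hA r]
  exact cfc_predicate (fun x : ℝ => x ^ r) A

lemma mpow_mul {A : Matrix n n ℂ} (hA : A.PosDef) (s t : ℝ) :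
    mpow A s * mpow A t = mpow A (s + t) := by
  rw [mpow_eq_cfc hA.isHermitian, mpow_eq_cfc hA.isHermitian, mpow_eq_cfc hA.isHermitian,
    ← cfc_mul _ _ _ (contOnSpec _ _) (contOnSpec _ _)]
  exact cfc_congr fun x hx => (Real.rpow_add (spec_pos hA x hx) s t).symm

lemma mpow_mpow {A : Matrix n n ℂ} (hA : A.PosDef) (s t : ℝ) :
    mpow (mpow A s) t = mpow A (s * t) := by
  rw [mpow_eq_cfc (mpow_isHermitian hA.isHermitian s), mpow_eq_cfc hA.isHermitian s,
    mpow_eq_cfc hA.isHermitian (s * t)]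
  have h := cfc_comp (fun x : ℝ => x ^ t) (fun x : ℝ => x ^ s) A hA.isHermitian
      (contOn _ _ ((A.finite_real_spectrum).image _)) (contOnSpec _ _)
  refine h.symm.trans ?_
  exact cfc_congr fun x hx => by
    simp only [Function.comp_apply]
    rw [← Real.rpow_mul (spec_pos hA x hx).le]

lemma mpow_zero {A : Matrix n n ℂ} (hA : A.IsHermitian) : mpow A 0 = 1 := by
  rw [mpow_eq_cfc hA]
  have : (fun x : ℝ => x ^ (0:ℝ)) = fun _ : ℝ => (1:ℝ) := by
    funext x; exact Real.rpow_zero x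
  rw [this]
  exact cfc_const_one ℝ A hA

lemma mpow_one {A : Matrix n n ℂ} (hA : A.IsHermitian) : mpow A 1 = A := by
  rw [mpow_eq_cfc hA]
  have : (fun x : ℝ => x ^ (1:ℝ)) = fun x : ℝ => x := by
    funext x; exact Real.rpow_one x
  rw [this]
  exact cfc_id' ℝ A hA


lemma conj_quadratic (A B : Matrix n n ℂ) (x : n → ℂ) :
    star x ⬝ᵥ (B * A * Bᴴ) *ᵥ x = star (Bᴴ *ᵥ x) ⬝ᵥ A *ᵥ (Bᴴ *ᵥ x) := by
  calc star x ⬝ᵥ (B * A * Bᴴ) *ᵥ x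
      = star x ⬝ᵥ B *ᵥ (A *ᵥ (Bᴴ *ᵥ x)) := by
        rw [Matrix.mulVec_mulVec, Matrix.mulVec_mulVec, Matrix.mul_assoc]
    _ = star x ᵥ* B ⬝ᵥ (A *ᵥ (Bᴴ *ᵥ x)) := Matrix.dotProduct_mulVec _ _ _
    _ = star (Bᴴ *ᵥ x) ⬝ᵥ A *ᵥ (Bᴴ *ᵥ x) := by rw [star_mulVec, conjTranspose_conjTranspose]

lemma posDef_conj {A : Matrix n n ℂ} (hA : A.PosDef) {B : Matrix n n ℂ} (hB : IsUnit B) :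
    (B * A * Bᴴ).PosDef := by
  refine Matrix.PosDef.of_dotProduct_mulVec_pos (Matrix.isHermitian_mul_mul_conjTranspose _ hA.isHermitian) fun x hx => ?_
  have hBH : IsUnit Bᴴ := by
    rw [← Matrix.star_eq_conjTranspose]; exact isUnit_star.mpr hB
  have hy : Bᴴ *ᵥ x ≠ 0 := by
    intro h
    have hinj := Matrix.mulVec_injective_iff_isUnit.mpr hBH
    exact hx (by simpa using hinj (h.trans (Matrix.mulVec_zero _).symm))
  rw [conj_quadratic]
  exact hA.dotProduct_mulVec_pos hy

lemma psd_conj {A : Matrix n n ℂ} (hA : A.PosSemidef) (C : Matrix n n ℂ) :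
    (C * A * Cᴴ).PosSemidef := hA.mul_mul_conjTranspose_same C

lemma loe_trans {A B C : Matrix n n ℂ} (h1 : (B - A).PosSemidef) (h2 : (C - B).PosSemidef) :
    (C - A).PosSemidef := by
  have := h2.add h1
  rwa [sub_add_sub_cancel] at this

lemma loe_conj {A B : Matrix n n ℂ} (h : (B - A).PosSemidef) (C : Matrix n n ℂ) :
    (C * B * Cᴴ - C * A * Cᴴ).PosSemidef := by
  have := h.mul_mul_conjTranspose_same C
  rwa [Matrix.mul_sub, Matrix.sub_mul] at this

lemma loe_add {A B C D : Matrix n n ℂ} (h1 : (B - A).PosSemidef) (h2 : (D - C).PosSemidef) :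
    ((B + D) - (A + C)).PosSemidef := by
  have := h1.add h2
  rwa [show B - A + (D - C) = B + D - (A + C) by abel] at this

lemma herm_real_smul {A : Matrix n n ℂ} (h : A.IsHermitian) (c : ℝ) :
    ((c : ℂ) • A).IsHermitian := by
  rw [Matrix.IsHermitian, conjTranspose_smul, h, Complex.star_def, Complex.conj_ofReal]

lemma loe_smul {A B : Matrix n n ℂ} (h : (B - A).PosSemidef) {c : ℝ} (hc : 0 ≤ c) :
    ((c : ℂ) • B - (c : ℂ) • A).PosSemidef := by
  rw [← smul_sub]
  refine Matrix.PosSemidef.of_dotProduct_mulVec_nonneg (herm_real_smul h.isHermitian c) fun x => ?_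
  rw [Matrix.smul_mulVec, dotProduct_smul, smul_eq_mul]
  have h0 : (0:ℂ) ≤ (c:ℂ) := by exact_mod_cast hc
  exact mul_nonneg h0 (h.dotProduct_mulVec_nonneg x)

lemma psd_smul {A : Matrix n n ℂ} (h : A.PosSemidef) {c : ℝ} (hc : 0 ≤ c) :
    ((c : ℂ) • A).PosSemidef := by
  have := loe_smul (A := 0) (B := A) (by simpa using h) hc
  simpa using this

lemma mpow_posDef {A : Matrix n n ℂ} (hA : A.PosDef) (r : ℝ) : (mpow A r).PosDef := by
  rw [mpow, dif_pos hA.isHermitian]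
  have hUu : IsUnit (hA.isHermitian.eigenvectorUnitary : Matrix n n ℂ) :=
    ⟨⟨_, star (hA.isHermitian.eigenvectorUnitary : Matrix n n ℂ),
      Unitary.coe_mul_star_self hA.isHermitian.eigenvectorUnitary,
      Unitary.coe_star_mul_self hA.isHermitian.eigenvectorUnitary⟩, rfl⟩
  have hD : (Matrix.diagonal (fun i => ((hA.isHermitian.eigenvalues i ^ r : ℝ) : ℂ))).PosDef := by
    rw [Matrix.posDef_diagonal_iff]
    intro i
    have := Real.rpow_pos_of_pos (hA.eigenvalues_pos i) r
    exact_mod_cast this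
  have := posDef_conj hD hUu
  rwa [← Matrix.star_eq_conjTranspose] at this

lemma mpow_mul_mpow_neg {A : Matrix n n ℂ} (hA : A.PosDef) (r : ℝ) :
    mpow A r * mpow A (-r) = 1 := by
  rw [mpow_mul hA, add_neg_cancel, mpow_zero hA.isHermitian]

lemma mpow_inv {A : Matrix n n ℂ} (hA : A.PosDef) (r : ℝ) :
    (mpow A r)⁻¹ = mpow A (-r) :=
  Matrix.inv_eq_right_inv (mpow_mul_mpow_neg hA r)

lemma mpow_neg_one {A : Matrix n n ℂ} (hA : A.PosDef) : mpow A (-1) = A⁻¹ := by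
  have := mpow_inv hA 1
  rw [mpow_one hA.isHermitian] at this
  exact this.symm

lemma sqrt_mono {A B : Matrix n n ℂ} (hA : A.PosDef) (hB : B.PosDef)
    (h : (B - A).PosSemidef) : (mpow B (1/2) - mpow A (1/2)).PosSemidef := by
  set P := mpow A (1/2) with hPdef
  set Q := mpow B (1/2) with hQdef
  have hP : P.PosDef := mpow_posDef hA _
  have hQ : Q.PosDef := mpow_posDef hB _
  have hT : (Q - P).IsHermitian := hQ.isHermitian.sub hP.isHermitian
  refine hT.posSemidef_iff_eigenvalues_nonneg.mpr (Pi.le_def.mpr fun i => ?_)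
  show 0 ≤ hT.eigenvalues i
  set t := hT.eigenvalues i with ht
  set v : n → ℂ := ⇑(hT.eigenvectorBasis i) with hv
  have hv0 : v ≠ 0 := by
    have h1 := hT.eigenvectorBasis.toBasis.ne_zero i
    rw [OrthonormalBasis.coe_toBasis] at h1
    intro hc
    apply h1
    ext j
    exact congrFun hc j
  have hvec : (Q - P) *ᵥ v = (t : ℂ) • v := by
    have h2 := hT.mulVec_eigenvectorBasis i
    rw [← hv, ← ht] at h2
    rw [h2]
    funext j
    simp [Pi.smul_apply, Complex.real_smul]
  have hQQ : Q * Q = B := by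
    rw [hQdef, mpow_mul hB]
    norm_num
    exact mpow_one hB.isHermitian
  have hPP : P * P = A := by
    rw [hPdef, mpow_mul hA]
    norm_num
    exact mpow_one hA.isHermitian
  have hkey : B - A = Q * (Q - P) + (Q - P) * P := by
    rw [Matrix.mul_sub, Matrix.sub_mul, hQQ, hPP]
    abel
  have hq1 : star v ⬝ᵥ (Q * (Q - P)) *ᵥ v = (t : ℂ) * (star v ⬝ᵥ Q *ᵥ v) := by
    rw [← Matrix.mulVec_mulVec, hvec, Matrix.mulVec_smul, dotProduct_smul, smul_eq_mul]
  have hq2 : star v ⬝ᵥ ((Q - P) * P) *ᵥ v = (t : ℂ) * (star v ⬝ᵥ P *ᵥ v) := by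
    rw [← Matrix.mulVec_mulVec, Matrix.dotProduct_mulVec]
    have hstar : star v ᵥ* (Q - P) = (t : ℂ) • star v := by
      have h3 : star ((Q - P) *ᵥ v) = star v ᵥ* (Q - P)ᴴ := star_mulVec _ _
      rw [hT] at h3
      rw [← h3, hvec]
      funext j
      simp [Pi.smul_apply, Pi.star_apply, smul_eq_mul, star_mul', Complex.star_def,
        Complex.conj_ofReal]
    rw [hstar, smul_dotProduct, smul_eq_mul]
  have hsum : (0:ℂ) ≤ (t : ℂ) * (star v ⬝ᵥ Q *ᵥ v + star v ⬝ᵥ P *ᵥ v) := by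
    have h4 := h.dotProduct_mulVec_nonneg v
    rw [hkey, Matrix.add_mulVec, dotProduct_add, hq1, hq2, ← mul_add] at h4
    exact h4
  have hpos : (0:ℂ) < star v ⬝ᵥ Q *ᵥ v + star v ⬝ᵥ P *ᵥ v :=
    add_pos (hQ.dotProduct_mulVec_pos hv0) (hP.dotProduct_mulVec_pos hv0)
  by_contra hneg
  push_neg at hneg
  have htC : (0:ℂ) < -(t : ℂ) := by
    rw [neg_pos]
    exact_mod_cast hneg
  have h5 := mul_pos htC hpos
  rw [neg_mul, neg_pos] at h5
  exact absurd hsum h5.not_ge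


lemma half_add_neg_half : (1:ℝ)/2 + -(1/2) = 0 := by norm_num

lemma mpow_half_mul_neg_half {A : Matrix n n ℂ} (hA : A.PosDef) :
    mpow A (1/2) * mpow A (-(1/2)) = 1 := by
  rw [mpow_mul hA]
  norm_num [mpow_zero hA.isHermitian]

lemma mpow_neg_half_mul_half {A : Matrix n n ℂ} (hA : A.PosDef) :
    mpow A (-(1/2)) * mpow A (1/2) = 1 := by
  rw [mpow_mul hA]
  norm_num [mpow_zero hA.isHermitian]

lemma inner_T_posDef {A B : Matrix n n ℂ} (hA : A.PosDef) (hB : B.PosDef) :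
    (mpow A (-(1/2)) * B * mpow A (-(1/2))).PosDef := by
  have h1 : (mpow A (-(1/2)))ᴴ = mpow A (-(1/2)) := mpow_isHermitian hA.isHermitian _
  have := posDef_conj hB (mpow_posDef hA (-(1/2))).isUnit
  rwa [h1] at this

lemma conj_inner_T {A B : Matrix n n ℂ} (hA : A.PosDef) :
    mpow A (1/2) * (mpow A (-(1/2)) * B * mpow A (-(1/2))) * mpow A (1/2) = B := by
  calc mpow A (1/2) * (mpow A (-(1/2)) * B * mpow A (-(1/2))) * mpow A (1/2)
      = (mpow A (1/2) * mpow A (-(1/2))) * B * (mpow A (-(1/2)) * mpow A (1/2)) := by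
        simp only [Matrix.mul_assoc]
    _ = B := by rw [mpow_half_mul_neg_half hA, mpow_neg_half_mul_half hA, Matrix.one_mul,
        Matrix.mul_one]

lemma rc_ofReal (r : ℝ) : (RCLike.ofReal r : ℂ) = Complex.ofReal r := rfl

lemma scalar_amgm {l : ℝ} (hl : 0 < l) : l ^ ((1:ℝ)/2) ≤ 2⁻¹ * (1 + l) := by
  have hu : (l ^ ((1:ℝ)/2)) ^ (2:ℕ) = l := by
    rw [← Real.rpow_natCast (l ^ ((1:ℝ)/2)) 2, ← Real.rpow_mul hl.le]
    norm_num
  nlinarith [sq_nonneg (l ^ ((1:ℝ)/2) - 1), Real.rpow_nonneg hl.le ((1:ℝ)/2)]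

lemma sqrt_le_avg_one_add {T : Matrix n n ℂ} (hT : T.PosDef) :
    (((2:ℂ)⁻¹) • (1 + T) - mpow T (1/2)).PosSemidef := by
  have hU1 : (hT.isHermitian.eigenvectorUnitary : Matrix n n ℂ) *
      star (hT.isHermitian.eigenvectorUnitary : Matrix n n ℂ) = 1 :=
    Unitary.coe_mul_star_self _
  have hTT : T = (hT.isHermitian.eigenvectorUnitary : Matrix n n ℂ) *
      Matrix.diagonal (RCLike.ofReal ∘ hT.isHermitian.eigenvalues) *
      star (hT.isHermitian.eigenvectorUnitary : Matrix n n ℂ) := hT.isHermitian.spectral_theorem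
  have hP : mpow T (1/2) = (hT.isHermitian.eigenvectorUnitary : Matrix n n ℂ) *
      Matrix.diagonal (fun i => ((hT.isHermitian.eigenvalues i ^ ((1:ℝ)/2) : ℝ) : ℂ)) *
      star (hT.isHermitian.eigenvectorUnitary : Matrix n n ℂ) := by
    rw [mpow, dif_pos hT.isHermitian]
  have key : ((2:ℂ)⁻¹) • (1 + T) - mpow T (1/2) =
      (hT.isHermitian.eigenvectorUnitary : Matrix n n ℂ) *
      (((2:ℂ)⁻¹) • (1 + Matrix.diagonal (RCLike.ofReal ∘ hT.isHermitian.eigenvalues)) -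
        Matrix.diagonal (fun i => ((hT.isHermitian.eigenvalues i ^ ((1:ℝ)/2) : ℝ) : ℂ))) *
      star (hT.isHermitian.eigenvectorUnitary : Matrix n n ℂ) := by
    simp only [Matrix.mul_sub, Matrix.sub_mul, mul_smul_comm, smul_mul_assoc, Matrix.mul_add,
      Matrix.add_mul, Matrix.mul_one, hU1]
    rw [← hTT, ← hP]
  rw [key]
  have hdiag : (((2:ℂ)⁻¹) • (1 + Matrix.diagonal (RCLike.ofReal ∘ hT.isHermitian.eigenvalues)) -
      Matrix.diagonal (fun i => ((hT.isHermitian.eigenvalues i ^ ((1:ℝ)/2) : ℝ) : ℂ))).PosSemidef := by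
    have : (((2:ℂ)⁻¹) • (1 + Matrix.diagonal (RCLike.ofReal ∘ hT.isHermitian.eigenvalues)) -
        Matrix.diagonal (fun i => ((hT.isHermitian.eigenvalues i ^ ((1:ℝ)/2) : ℝ) : ℂ))) =
        Matrix.diagonal (fun i =>
          (((2:ℝ)⁻¹ * (1 + hT.isHermitian.eigenvalues i)
            - hT.isHermitian.eigenvalues i ^ ((1:ℝ)/2) : ℝ) : ℂ)) := by
      ext i j
      rcases eq_or_ne i j with rfl | hij
      · simp only [Matrix.sub_apply, Matrix.smul_apply, Matrix.add_apply, Matrix.one_apply_eq,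
          Matrix.diagonal_apply_eq, Function.comp_apply, smul_eq_mul]
        simp only [rc_ofReal]
        push_cast
        ring
      · simp [Matrix.diagonal_apply_ne _ hij, Matrix.one_apply_ne hij]
    rw [this]
    refine Matrix.PosSemidef.diagonal fun i => ?_
    have h1 := scalar_amgm (hT.eigenvalues_pos i)
    have h2 : (0:ℝ) ≤ 2⁻¹ * (1 + hT.isHermitian.eigenvalues i)
        - hT.isHermitian.eigenvalues i ^ ((1:ℝ)/2) := by linarith
    simp only [Pi.zero_apply]
    exact_mod_cast h2
  have := psd_conj hdiag (hT.isHermitian.eigenvectorUnitary : Matrix n n ℂ)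
  rwa [← Matrix.star_eq_conjTranspose] at this

lemma gm_posDef {A B : Matrix n n ℂ} (hA : A.PosDef) (hB : B.PosDef) :
    (geomMean A B).PosDef := by
  have half : (mpow A (1/2))ᴴ = mpow A (1/2) := mpow_isHermitian hA.isHermitian _
  have := posDef_conj (mpow_posDef (inner_T_posDef hA hB) (1/2)) (mpow_posDef hA (1/2)).isUnit
  rw [half] at this
  exact this

lemma gm_le_avg {A B : Matrix n n ℂ} (hA : A.PosDef) (hB : B.PosDef) :
    (((2:ℂ)⁻¹) • (A + B) - geomMean A B).PosSemidef := by
  have hT := inner_T_posDef hA hB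
  have hstep := sqrt_le_avg_one_add hT
  have hconj := loe_conj hstep (mpow A (1/2))
  have half : (mpow A (1/2))ᴴ = mpow A (1/2) := mpow_isHermitian hA.isHermitian _
  rw [half] at hconj
  have e1 : mpow A (1/2) * (((2:ℂ)⁻¹) • (1 + (mpow A (-(1/2)) * B * mpow A (-(1/2))))) *
      mpow A (1/2) = ((2:ℂ)⁻¹) • (A + B) := by
    rw [mul_smul_comm, smul_mul_assoc]
    congr 1
    rw [Matrix.mul_add, Matrix.add_mul, Matrix.mul_one, conj_inner_T hA]
    congr 1
    rw [mpow_mul hA]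
    norm_num [mpow_one hA.isHermitian]
  rw [e1] at hconj
  exact hconj

lemma pd_det_unit {A : Matrix n n ℂ} (hA : A.PosDef) : IsUnit A.det :=
  (Matrix.isUnit_iff_isUnit_det _).mp hA.isUnit

lemma pd_mul_inv {A : Matrix n n ℂ} (hA : A.PosDef) : A * A⁻¹ = 1 :=
  Matrix.mul_nonsing_inv _ (pd_det_unit hA)

lemma pd_inv_mul {A : Matrix n n ℂ} (hA : A.PosDef) : A⁻¹ * A = 1 :=
  Matrix.nonsing_inv_mul _ (pd_det_unit hA)

lemma mpow_sandwich_cancel {B X : Matrix n n ℂ} (hB : B.PosDef) :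
    mpow B (-(1/2)) * (mpow B (1/2) * X) = X := by
  rw [← Matrix.mul_assoc, mpow_neg_half_mul_half hB, Matrix.one_mul]

lemma mpow_sandwich_cancel' {B X : Matrix n n ℂ} (hB : B.PosDef) :
    mpow B (1/2) * (mpow B (-(1/2)) * X) = X := by
  rw [← Matrix.mul_assoc, mpow_half_mul_neg_half hB, Matrix.one_mul]

lemma mul_self_eq_mpow_two {W : Matrix n n ℂ} (hW : W.PosDef) : W * W = mpow W 2 := by
  have h := mpow_mul hW 1 1
  rw [mpow_one hW.isHermitian] at h
  norm_num at h
  exact h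

lemma mpow_conj_one {B : Matrix n n ℂ} (hB : B.PosDef) :
    mpow B (-(1/2)) * B * mpow B (-(1/2)) = 1 := by
  nth_rewrite 2 [← mpow_one hB.isHermitian]
  rw [mpow_mul hB, mpow_mul hB]
  norm_num [mpow_zero hB.isHermitian]

lemma mpow_conj_inv {A : Matrix n n ℂ} (hA : A.PosDef) :
    mpow A (1/2) * A⁻¹ * mpow A (1/2) = 1 := by
  rw [← mpow_neg_one hA, mpow_mul hA, mpow_mul hA]
  norm_num [mpow_zero hA.isHermitian]

lemma pd_smul {A : Matrix n n ℂ} (hA : A.PosDef) {c : ℝ} (hc : 0 < c) :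
    ((c:ℂ) • A).PosDef := by
  refine Matrix.PosDef.of_dotProduct_mulVec_pos (herm_real_smul hA.isHermitian c) fun x hx => ?_
  rw [Matrix.smul_mulVec, dotProduct_smul, smul_eq_mul]
  exact mul_pos (by exact_mod_cast hc) (hA.dotProduct_mulVec_pos hx)

lemma inv_antitone {A B : Matrix n n ℂ} (hA : A.PosDef) (hB : B.PosDef)
    (h : (B - A).PosSemidef) : (A⁻¹ - B⁻¹).PosSemidef := by
  set E := mpow B (-(1/2)) * A * mpow B (-(1/2)) with hEdef
  have hE : E.PosDef := inner_T_posDef hB hA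
  have hEherm : (mpow B (-(1/2)))ᴴ = mpow B (-(1/2)) := mpow_isHermitian hB.isHermitian _
  have h1 : ((1:Matrix n n ℂ) - E).PosSemidef := by
    have := loe_conj h (mpow B (-(1/2)))
    rwa [hEherm, mpow_conj_one hB, ← hEdef] at this
  have hFherm : (mpow E (-(1/2)))ᴴ = mpow E (-(1/2)) := mpow_isHermitian hE.isHermitian _
  have h2 : (E⁻¹ - 1).PosSemidef := by
    have := loe_conj h1 (mpow E (-(1/2)))
    rw [hFherm, mpow_conj_one hE] at this
    rwa [Matrix.mul_one, mpow_mul hE, show (-(1/2) + -(1/2) : ℝ) = -1 by norm_num,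
      mpow_neg_one hE] at this
  have h3 : E⁻¹ = mpow B (1/2) * A⁻¹ * mpow B (1/2) := by
    apply Matrix.inv_eq_right_inv
    rw [hEdef]
    calc mpow B (-(1/2)) * A * mpow B (-(1/2)) * (mpow B (1/2) * A⁻¹ * mpow B (1/2))
        = mpow B (-(1/2)) * (A * ((mpow B (-(1/2)) * mpow B (1/2)) * (A⁻¹ * mpow B (1/2)))) := by
          simp only [Matrix.mul_assoc]
      _ = mpow B (-(1/2)) * (A * (A⁻¹ * mpow B (1/2))) := by
          rw [mpow_neg_half_mul_half hB, Matrix.one_mul]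
      _ = mpow B (-(1/2)) * mpow B (1/2) := by
          rw [← Matrix.mul_assoc A, pd_mul_inv hA, Matrix.one_mul]
      _ = 1 := mpow_neg_half_mul_half hB
  have h4 := loe_conj h2 (mpow B (-(1/2)))
  rw [hEherm, h3, Matrix.mul_one] at h4
  have e1 : mpow B (-(1/2)) * (mpow B (1/2) * A⁻¹ * mpow B (1/2)) * mpow B (-(1/2)) = A⁻¹ := by
    calc mpow B (-(1/2)) * (mpow B (1/2) * A⁻¹ * mpow B (1/2)) * mpow B (-(1/2))
        = (mpow B (-(1/2)) * mpow B (1/2)) * A⁻¹ * (mpow B (1/2) * mpow B (-(1/2))) := by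
          simp only [Matrix.mul_assoc]
      _ = A⁻¹ := by
          rw [mpow_neg_half_mul_half hB, mpow_half_mul_neg_half hB, Matrix.one_mul,
            Matrix.mul_one]
  have e2 : mpow B (-(1/2)) * mpow B (-(1/2)) = B⁻¹ := by
    rw [mpow_mul hB, show (-(1/2) + -(1/2) : ℝ) = -1 by norm_num, mpow_neg_one hB]
  rwa [e1, e2] at h4

lemma gm_riccati {A B : Matrix n n ℂ} (hA : A.PosDef) (hB : B.PosDef) :
    geomMean A B * A⁻¹ * geomMean A B = B := by
  set T := mpow A (-(1/2)) * B * mpow A (-(1/2)) with hTdef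
  have hT : T.PosDef := inner_T_posDef hA hB
  set W := mpow T (1/2) with hWdef
  have hWW : W * W = T := by
    rw [hWdef, mpow_mul hT]
    norm_num [mpow_one hT.isHermitian]
  have hmid := mpow_conj_inv hA
  calc mpow A (1/2) * W * mpow A (1/2) * A⁻¹ * (mpow A (1/2) * W * mpow A (1/2))
      = mpow A (1/2) * W * ((mpow A (1/2) * A⁻¹ * mpow A (1/2)) * (W * mpow A (1/2))) := by
        simp only [Matrix.mul_assoc]
    _ = mpow A (1/2) * W * (W * mpow A (1/2)) := by rw [hmid, Matrix.one_mul]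
    _ = mpow A (1/2) * T * mpow A (1/2) := by
        simp only [Matrix.mul_assoc]
        rw [← Matrix.mul_assoc W W, hWW]
    _ = B := conj_inner_T hA

lemma riccati_unique {A B Z : Matrix n n ℂ} (hA : A.PosDef) (hB : B.PosDef) (hZ : Z.PosDef)
    (hric : Z * A⁻¹ * Z = B) : Z = geomMean A B := by
  set T := mpow A (-(1/2)) * B * mpow A (-(1/2)) with hTdef
  have hT : T.PosDef := inner_T_posDef hA hB
  set W := mpow A (-(1/2)) * Z * mpow A (-(1/2)) with hWdef
  have hW : W.PosDef := inner_T_posDef hA hZ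
  have hninv : mpow A (-(1/2)) * mpow A (-(1/2)) = A⁻¹ := by
    rw [mpow_mul hA, show (-(1/2) + -(1/2) : ℝ) = -1 by norm_num, mpow_neg_one hA]
  have hW2 : W ^ 2 = T := by
    rw [pow_two, hWdef, hTdef, ← hric]
    simp only [Matrix.mul_assoc]
    rw [← Matrix.mul_assoc (mpow A (-(1/2))) (mpow A (-(1/2))), hninv]
  have hTh2 : (mpow T (1/2)) ^ 2 = T := by
    rw [pow_two, mpow_mul hT]
    norm_num [mpow_one hT.isHermitian]
  have hWeq : W = mpow T (1/2) := by
    open scoped MatrixOrder in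
    rw [← CFC.sqrt_sq W (Matrix.nonneg_iff_posSemidef.mpr hW.posSemidef),
      ← CFC.sqrt_sq (mpow T (1/2)) (Matrix.nonneg_iff_posSemidef.mpr (mpow_posDef hT (1/2)).posSemidef),
      hW2.trans hTh2.symm]
  have : mpow A (1/2) * W * mpow A (1/2) = Z := conj_inner_T hA
  rw [← this, hWeq, hTdef]
  rfl

lemma riccati_inv {A B G : Matrix n n ℂ} (hA : A.PosDef) (hG : G.PosDef)
    (hric : G * A⁻¹ * G = B) : G⁻¹ * A * G⁻¹ = B⁻¹ := by
  rw [← hric, Matrix.mul_inv_rev, Matrix.mul_inv_rev,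
    Matrix.nonsing_inv_nonsing_inv _ (pd_det_unit hA)]
  simp only [Matrix.mul_assoc]

lemma gm_comm {A B : Matrix n n ℂ} (hA : A.PosDef) (hB : B.PosDef) :
    geomMean A B = geomMean B A := by
  have hG := gm_posDef hA hB
  apply riccati_unique hB hA hG
  have h1 := riccati_inv hA hG (gm_riccati hA hB)
  rw [← h1]
  calc geomMean A B * ((geomMean A B)⁻¹ * A * (geomMean A B)⁻¹) * geomMean A B
      = (geomMean A B * (geomMean A B)⁻¹) * A * ((geomMean A B)⁻¹ * geomMean A B) := by
        simp only [Matrix.mul_assoc]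
    _ = A := by rw [pd_mul_inv hG, pd_inv_mul hG, Matrix.one_mul, Matrix.mul_one]

lemma gm_inv {A B : Matrix n n ℂ} (hA : A.PosDef) (hB : B.PosDef) :
    (geomMean A B)⁻¹ = geomMean A⁻¹ B⁻¹ := by
  have hG := gm_posDef hA hB
  apply riccati_unique hA.inv hB.inv hG.inv
  rw [Matrix.nonsing_inv_nonsing_inv _ (pd_det_unit hA)]
  exact riccati_inv hA hG (gm_riccati hA hB)

lemma gm_mono_right {A B B' : Matrix n n ℂ} (hA : A.PosDef) (hB : B.PosDef) (hB' : B'.PosDef)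
    (h : (B' - B).PosSemidef) : (geomMean A B' - geomMean A B).PosSemidef := by
  have hherm : (mpow A (-(1/2)))ᴴ = mpow A (-(1/2)) := mpow_isHermitian hA.isHermitian _
  have h1 := loe_conj h (mpow A (-(1/2)))
  rw [hherm] at h1
  have h2 := sqrt_mono (inner_T_posDef hA hB) (inner_T_posDef hA hB') h1
  have h3 := loe_conj h2 (mpow A (1/2))
  have hherm2 : (mpow A (1/2))ᴴ = mpow A (1/2) := mpow_isHermitian hA.isHermitian _
  rwa [hherm2] at h3

lemma gm_mono {A A' B B' : Matrix n n ℂ} (hA : A.PosDef) (hA' : A'.PosDef) (hB : B.PosDef)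
    (hB' : B'.PosDef) (h1 : (A' - A).PosSemidef) (h2 : (B' - B).PosSemidef) :
    (geomMean A' B' - geomMean A B).PosSemidef := by
  refine loe_trans (gm_mono_right hA hB hB' h2) ?_
  rw [gm_comm hA hB', gm_comm hA' hB']
  exact gm_mono_right hB' hA hA' h1

lemma gm_max {P Q Z : Matrix n n ℂ} (hP : P.PosDef) (hQ : Q.PosDef) (hZ : Z.PosDef)
    (h : (Q - Z * P⁻¹ * Z).PosSemidef) : (geomMean P Q - Z).PosSemidef := by
  set T := mpow P (-(1/2)) * Q * mpow P (-(1/2)) with hTdef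
  have hT : T.PosDef := inner_T_posDef hP hQ
  set W := mpow P (-(1/2)) * Z * mpow P (-(1/2)) with hWdef
  have hW : W.PosDef := inner_T_posDef hP hZ
  have hherm : (mpow P (-(1/2)))ᴴ = mpow P (-(1/2)) := mpow_isHermitian hP.isHermitian _
  have hninv : mpow P (-(1/2)) * mpow P (-(1/2)) = P⁻¹ := by
    rw [mpow_mul hP, show (-(1/2) + -(1/2) : ℝ) = -1 by norm_num, mpow_neg_one hP]
  have hWW : W * W = mpow P (-(1/2)) * (Z * P⁻¹ * Z) * mpow P (-(1/2)) := by
    rw [hWdef]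
    calc mpow P (-(1/2)) * Z * mpow P (-(1/2)) * (mpow P (-(1/2)) * Z * mpow P (-(1/2)))
        = mpow P (-(1/2)) * (Z * ((mpow P (-(1/2)) * mpow P (-(1/2))) * (Z * mpow P (-(1/2))))) := by
          simp only [Matrix.mul_assoc]
      _ = mpow P (-(1/2)) * (Z * (P⁻¹ * (Z * mpow P (-(1/2))))) := by rw [hninv]
      _ = mpow P (-(1/2)) * (Z * P⁻¹ * Z) * mpow P (-(1/2)) := by
          simp only [Matrix.mul_assoc]
  have h1 : (T - W * W).PosSemidef := by
    have := loe_conj h (mpow P (-(1/2)))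
    rwa [hherm, ← hWW, ← hTdef] at this
  have hWWpd : (W * W).PosDef := by
    rw [mul_self_eq_mpow_two hW]
    exact mpow_posDef hW 2
  have h2 := sqrt_mono hWWpd hT h1
  have hWsqrt : mpow (W * W) (1/2) = W := by
    rw [mul_self_eq_mpow_two hW, mpow_mpow hW]
    norm_num [mpow_one hW.isHermitian]
  rw [hWsqrt] at h2
  have h3 := loe_conj h2 (mpow P (1/2))
  have hherm2 : (mpow P (1/2))ᴴ = mpow P (1/2) := mpow_isHermitian hP.isHermitian _
  rw [hherm2] at h3
  rwa [show mpow P (1/2) * W * mpow P (1/2) = Z from conj_inner_T hP] at h3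

lemma quad_cs {Z P : Matrix n n ℂ} (hZ : Z.IsHermitian) (hP : P.PosDef) (V : Matrix n n ℂ) :
    ((Z * P⁻¹ * Z) - (Z * V + Vᴴ * Z - Vᴴ * P * V)).PosSemidef := by
  have hPinvH : (P⁻¹)ᴴ = P⁻¹ := hP.inv.isHermitian
  have hZ' : Zᴴ = Z := hZ
  have key : (V - P⁻¹ * Z)ᴴ * P * (V - P⁻¹ * Z) =
      (Z * P⁻¹ * Z) - (Z * V + Vᴴ * Z - Vᴴ * P * V) := by
    simp only [conjTranspose_sub, conjTranspose_mul, hPinvH, hZ', Matrix.sub_mul, Matrix.mul_sub,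
      Matrix.mul_assoc]
    rw [show P * (P⁻¹ * Z) = Z by rw [← Matrix.mul_assoc, pd_mul_inv hP, Matrix.one_mul]]
    rw [show P⁻¹ * (P * V) = V by rw [← Matrix.mul_assoc, pd_inv_mul hP, Matrix.one_mul]]
    abel
  rw [← key]
  exact hP.posSemidef.conjTranspose_mul_mul_same _

lemma gm_concave {P1 Q1 P2 Q2 : Matrix n n ℂ} (hP1 : P1.PosDef) (hQ1 : Q1.PosDef)
    (hP2 : P2.PosDef) (hQ2 : Q2.PosDef) :
    (geomMean (P1 + P2) (Q1 + Q2) - (geomMean P1 Q1 + geomMean P2 Q2)).PosSemidef := by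
  set G1 := geomMean P1 Q1 with hG1def
  set G2 := geomMean P2 Q2 with hG2def
  have hG1 : G1.PosDef := gm_posDef hP1 hQ1
  have hG2 : G2.PosDef := gm_posDef hP2 hQ2
  have hS : (G1 + G2).PosDef := hG1.add hG2
  have hP' : (P1 + P2).PosDef := hP1.add hP2
  have hQ' : (Q1 + Q2).PosDef := hQ1.add hQ2
  set V := (P1 + P2)⁻¹ * (G1 + G2) with hVdef
  have hric1 : G1 * P1⁻¹ * G1 = Q1 := gm_riccati hP1 hQ1
  have hric2 : G2 * P2⁻¹ * G2 = Q2 := gm_riccati hP2 hQ2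
  have h1 := quad_cs hG1.isHermitian hP1 V
  have h2 := quad_cs hG2.isHermitian hP2 V
  rw [hric1] at h1
  rw [hric2] at h2
  have hsum := loe_add h1 h2
  have hVH : Vᴴ = (G1 + G2) * (P1 + P2)⁻¹ := by
    rw [hVdef, conjTranspose_mul, hP'.inv.isHermitian, hS.isHermitian]
  have hcomb : (G1 * V + Vᴴ * G1 - Vᴴ * P1 * V) + (G2 * V + Vᴴ * G2 - Vᴴ * P2 * V) =
      (G1 + G2) * V + Vᴴ * (G1 + G2) - Vᴴ * (P1 + P2) * V := by
    simp only [Matrix.add_mul, Matrix.mul_add]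
    abel
  rw [hcomb] at hsum
  have hfinal : (G1 + G2) * V + Vᴴ * (G1 + G2) - Vᴴ * (P1 + P2) * V =
      (G1 + G2) * (P1 + P2)⁻¹ * (G1 + G2) := by
    rw [hVH, hVdef]
    have e1 : (G1 + G2) * ((P1 + P2)⁻¹ * (G1 + G2)) =
        (G1 + G2) * (P1 + P2)⁻¹ * (G1 + G2) := by simp only [Matrix.mul_assoc]
    have e2 : (G1 + G2) * (P1 + P2)⁻¹ * (P1 + P2) * ((P1 + P2)⁻¹ * (G1 + G2)) =
        (G1 + G2) * (P1 + P2)⁻¹ * (G1 + G2) := by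
      calc (G1 + G2) * (P1 + P2)⁻¹ * (P1 + P2) * ((P1 + P2)⁻¹ * (G1 + G2))
          = (G1 + G2) * ((P1 + P2)⁻¹ * ((P1 + P2) * (P1 + P2)⁻¹)) * (G1 + G2) := by
            simp only [Matrix.mul_assoc]
        _ = (G1 + G2) * (P1 + P2)⁻¹ * (G1 + G2) := by
            rw [pd_mul_inv hP', Matrix.mul_one, Matrix.mul_assoc]
    rw [e1, e2]
    abel
  rw [hfinal] at hsum
  exact gm_max hP' hQ' hS hsum

lemma gm_smul {A B : Matrix n n ℂ} (hA : A.PosDef) (hB : B.PosDef) {c : ℝ} (hc : 0 < c) :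
    geomMean ((c:ℂ) • A) ((c:ℂ) • B) = (c:ℂ) • geomMean A B := by
  have hcC : (c:ℂ) ≠ 0 := by exact_mod_cast hc.ne'
  have hcA := pd_smul hA hc
  have hcB := pd_smul hB hc
  have hG := gm_posDef hA hB
  have hcG := pd_smul hG hc
  symm
  apply riccati_unique hcA hcB hcG
  have hinv : ((c:ℂ) • A)⁻¹ = (c:ℂ)⁻¹ • A⁻¹ := by
    apply Matrix.inv_eq_right_inv
    rw [smul_mul_smul_comm, mul_inv_cancel₀ hcC, pd_mul_inv hA, one_smul]
  rw [hinv, smul_mul_smul_comm, smul_mul_smul_comm, gm_riccati hA hB,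
    mul_inv_cancel₀ hcC, one_mul]

set_option maxHeartbeats 1000000 in
lemma gm_mpow_avg {A : Matrix n n ℂ} (hA : A.PosDef) (a b : ℝ) :
    geomMean (mpow A a) (mpow A b) = mpow A ((a + b) / 2) := by
  unfold geomMean
  rw [mpow_mpow hA a (1/2), mpow_mpow hA a (-(1/2)), mpow_mul hA (a * -(1/2)) b,
    mpow_mul hA (a * -(1/2) + b) (a * -(1/2)),
    mpow_mpow hA (a * -(1/2) + b + a * -(1/2)) (1/2),
    mpow_mul hA (a * (1/2)) ((a * -(1/2) + b + a * -(1/2)) * (1/2)),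
    mpow_mul hA (a * (1/2) + (a * -(1/2) + b + a * -(1/2)) * (1/2)) (a * (1/2))]
  rw [show a * (1/2) + (a * -(1/2) + b + a * -(1/2)) * (1/2) + a * (1/2) = (a + b)/2 by ring]

lemma pd_half_smul {A : Matrix n n ℂ} (hA : A.PosDef) : ((2:ℂ)⁻¹ • A).PosDef := by
  rw [show ((2:ℂ))⁻¹ = (((2:ℝ)⁻¹ : ℝ) : ℂ) by norm_num]
  exact pd_smul hA (by norm_num)

lemma loe_half_smul {A B : Matrix n n ℂ} (h : (B - A).PosSemidef) :
    ((2:ℂ)⁻¹ • B - (2:ℂ)⁻¹ • A).PosSemidef := by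
  rw [show ((2:ℂ))⁻¹ = (((2:ℝ)⁻¹ : ℝ) : ℂ) by norm_num]
  exact loe_smul h (by norm_num)

def ConcAt (n : Type*) [Fintype n] [DecidableEq n] (c : ℝ) : Prop :=
  ∀ (A B : Matrix n n ℂ), A.PosDef → B.PosDef →
    (mpow ((2:ℂ)⁻¹ • (A + B)) c - (2:ℂ)⁻¹ • (mpow A c + mpow B c)).PosSemidef

lemma concAt_zero : ConcAt n 0 := by
  intro A B hA hB
  have hC : ((2:ℂ)⁻¹ • (A + B)).PosDef := pd_half_smul (hA.add hB)
  rw [mpow_zero hA.isHermitian, mpow_zero hB.isHermitian, mpow_zero hC.isHermitian]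
  have : ((1:Matrix n n ℂ) + 1) = (2:ℂ) • 1 := by
    rw [two_smul]
  rw [this, smul_smul, inv_mul_cancel₀ (two_ne_zero), one_smul, sub_self]
  exact Matrix.PosSemidef.zero

lemma concAt_one : ConcAt n 1 := by
  intro A B hA hB
  have hC : ((2:ℂ)⁻¹ • (A + B)).PosDef := pd_half_smul (hA.add hB)
  rw [mpow_one hA.isHermitian, mpow_one hB.isHermitian, mpow_one hC.isHermitian, sub_self]
  exact Matrix.PosSemidef.zero

lemma concAt_mid {a b : ℝ} (ha : ConcAt n a) (hb : ConcAt n b) : ConcAt n ((a + b) / 2) := by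
  intro A B hA hB
  set C := (2:ℂ)⁻¹ • (A + B) with hCdef
  have hC : C.PosDef := pd_half_smul (hA.add hB)
  have hAa := mpow_posDef hA a
  have hAb := mpow_posDef hA b
  have hBa := mpow_posDef hB a
  have hBb := mpow_posDef hB b
  have hCa := mpow_posDef hC a
  have hCb := mpow_posDef hC b
  have hSa : (mpow A a + mpow B a).PosDef := hAa.add hBa
  have hSb : (mpow A b + mpow B b).PosDef := hAb.add hBb
  -- step 1 : 2⁻¹•(A^h + B^h) ≼ 2⁻¹ • gm (A^a + B^a) (A^b + B^b)
  have jc := gm_concave hAa hAb hBa hBb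
  have step1 := loe_half_smul jc
  rw [gm_mpow_avg hA a b, gm_mpow_avg hB a b] at step1
  -- step 2 : scalar absorbed into geomMean
  have habs : (2:ℂ)⁻¹ • geomMean (mpow A a + mpow B a) (mpow A b + mpow B b) =
      geomMean ((2:ℂ)⁻¹ • (mpow A a + mpow B a)) ((2:ℂ)⁻¹ • (mpow A b + mpow B b)) := by
    rw [show ((2:ℂ))⁻¹ = (((2:ℝ)⁻¹ : ℝ) : ℂ) by norm_num]
    exact (gm_smul hSa hSb (by norm_num)).symm
  rw [habs] at step1
  -- step 3 : monotonicity + induction hypotheses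
  have hha := ha A B hA hB
  have hhb := hb A B hA hB
  have step2 := gm_mono (pd_half_smul hSa) hCa (pd_half_smul hSb) hCb hha hhb
  rw [gm_mpow_avg hC a b] at step2
  exact loe_trans step1 step2

lemma concAt_dyadic : ∀ (m : ℕ) (k : ℕ), k ≤ 2^m → ConcAt n ((k:ℝ)/2^m) := by
  intro m
  induction m with
  | zero =>
    intro k hk
    interval_cases k
    · simpa using concAt_zero
    · simpa using concAt_one
  | succ m ih =>
    intro k hk
    have h2 : (2:ℕ)^(m+1) = 2 * 2^m := by ring
    have hka : k / 2 ≤ 2^m := by omega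
    have hkb : k - k / 2 ≤ 2^m := by omega
    have hab : k / 2 + (k - k / 2) = k := by omega
    have ha := ih (k / 2) hka
    have hb := ih (k - k / 2) hkb
    have hmid := concAt_mid ha hb
    have heq : (((k / 2 : ℕ):ℝ)/2^m + ((k - k / 2 : ℕ):ℝ)/2^m) / 2 = (k:ℝ)/2^(m+1) := by
      have : ((k / 2 : ℕ):ℝ) + ((k - k / 2 : ℕ):ℝ) = (k:ℝ) := by
        exact_mod_cast congrArg (Nat.cast : ℕ → ℝ) hab
      rw [← add_div, this, div_div, ← pow_succ]
    rwa [heq] at hmid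

lemma mpow_continuous {A : Matrix n n ℂ} (hA : A.PosDef) :
    Continuous fun c : ℝ => mpow A c := by
  have hfun : (fun c : ℝ => mpow A c) = fun c =>
      (hA.isHermitian.eigenvectorUnitary : Matrix n n ℂ) *
        Matrix.diagonal (fun i => ((hA.isHermitian.eigenvalues i ^ c : ℝ) : ℂ)) *
        star (hA.isHermitian.eigenvectorUnitary : Matrix n n ℂ) := by
    funext c
    rw [mpow, dif_pos hA.isHermitian]
  rw [hfun]
  refine Continuous.matrix_mul (Continuous.matrix_mul continuous_const ?_) continuous_const
  refine Continuous.matrix_diagonal ?_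
  refine continuous_pi fun i => Complex.continuous_ofReal.comp ?_
  have hl := hA.eigenvalues_pos i
  show Continuous fun c : ℝ => hA.isHermitian.eigenvalues i ^ c
  have hexp : (fun c : ℝ => hA.isHermitian.eigenvalues i ^ c) =
      fun c => Real.exp (Real.log (hA.isHermitian.eigenvalues i) * c) := by
    funext c
    rw [Real.rpow_def_of_pos hl]
  rw [hexp]
  exact Real.continuous_exp.comp (continuous_const.mul continuous_id)

lemma psd_limit {g : ℕ → Matrix n n ℂ} {L : Matrix n n ℂ} (hg : ∀ m, (g m).PosSemidef)
    (hlim : Filter.Tendsto g Filter.atTop (nhds L)) : L.PosSemidef := by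
  have hent : ∀ i j, Filter.Tendsto (fun m => g m i j) Filter.atTop (nhds (L i j)) := by
    intro i j
    exact (((continuous_apply j).comp (continuous_apply i)).tendsto L).comp hlim
  refine Matrix.PosSemidef.of_dotProduct_mulVec_nonneg ?_ ?_
  · have hsym : ∀ i j, L i j = star (L j i) := by
      intro i j
      have h1 : Filter.Tendsto (fun m => star (g m j i)) Filter.atTop (nhds (star (L j i))) :=
        (Complex.continuous_conj.tendsto _).comp (hent j i)
      have h2 : (fun m => star (g m j i)) = fun m => g m i j := by
        funext m
        calc star (g m j i) = (g m)ᴴ i j := (Matrix.conjTranspose_apply _ _ _).symm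
          _ = g m i j := by rw [(hg m).isHermitian]
      rw [h2] at h1
      exact tendsto_nhds_unique (hent i j) h1
    ext i j
    rw [Matrix.conjTranspose_apply]
    exact (hsym i j).symm
  · intro x
    have hcont : Continuous (fun M : Matrix n n ℂ => star x ⬝ᵥ M *ᵥ x) := by
      simp only [dotProduct, Matrix.mulVec]
      exact continuous_finset_sum _ fun i _ =>
        continuous_const.mul (continuous_finset_sum _ fun j _ =>
          (continuous_id.matrix_elem i j).mul continuous_const)
    have hq : Filter.Tendsto (fun m => star x ⬝ᵥ (g m) *ᵥ x) Filter.atTop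
        (nhds (star x ⬝ᵥ L *ᵥ x)) := (hcont.tendsto L).comp hlim
    have him : (star x ⬝ᵥ L *ᵥ x).im = 0 := by
      have h1 : Filter.Tendsto (fun m => (star x ⬝ᵥ (g m) *ᵥ x).im) Filter.atTop
          (nhds ((star x ⬝ᵥ L *ᵥ x).im)) := (Complex.continuous_im.tendsto _).comp hq
      have h2 : (fun m => (star x ⬝ᵥ (g m) *ᵥ x).im) = fun _ => (0:ℝ) := by
        funext m
        have h3 := (hg m).dotProduct_mulVec_nonneg x
        rw [Complex.le_def] at h3
        simpa using h3.2.symm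
      rw [h2] at h1
      exact (tendsto_nhds_unique tendsto_const_nhds h1).symm
    have hre : 0 ≤ (star x ⬝ᵥ L *ᵥ x).re := by
      have h1 : Filter.Tendsto (fun m => (star x ⬝ᵥ (g m) *ᵥ x).re) Filter.atTop
          (nhds ((star x ⬝ᵥ L *ᵥ x).re)) := (Complex.continuous_re.tendsto _).comp hq
      refine ge_of_tendsto' h1 fun m => ?_
      have h3 := (hg m).dotProduct_mulVec_nonneg x
      rw [Complex.le_def] at h3
      simpa using h3.1
    rw [Complex.le_def]
    refine ⟨by simpa using hre, by simpa using him.symm⟩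

lemma concAt_all {c : ℝ} (hc1 : 0 ≤ c) (hc2 : c ≤ 1) : ConcAt n c := by
  intro A B hA hB
  have hC : ((2:ℂ)⁻¹ • (A + B)).PosDef := pd_half_smul (hA.add hB)
  set F : ℝ → Matrix n n ℂ := fun t =>
    mpow ((2:ℂ)⁻¹ • (A + B)) t - (2:ℂ)⁻¹ • (mpow A t + mpow B t) with hF
  have hFc : Continuous F := by
    apply Continuous.sub (mpow_continuous hC)
    exact ((mpow_continuous hA).add (mpow_continuous hB)).const_smul ((2:ℂ)⁻¹)
  have hfle : ∀ m : ℕ, (⌊c * 2^m⌋₊ : ℕ) ≤ 2^m := by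
    intro m
    have hpow : (0:ℝ) < 2^m := by positivity
    have h1 : c * 2^m ≤ 2^m := by nlinarith
    have h2 : (⌊c * 2^m⌋₊:ℝ) ≤ ((2^m : ℕ):ℝ) := by
      push_cast
      exact (Nat.floor_le (by positivity)).trans h1
    exact_mod_cast h2
  have hdy : ∀ m : ℕ, (F ((⌊c * 2^m⌋₊ : ℝ) / 2^m)).PosSemidef := by
    intro m
    exact concAt_dyadic m ⌊c * 2^m⌋₊ (hfle m) A B hA hB
  have h2pow : Filter.Tendsto (fun m : ℕ => (2:ℝ)^m) Filter.atTop Filter.atTop :=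
    tendsto_pow_atTop_atTop_of_one_lt one_lt_two
  have hflim : Filter.Tendsto (fun m : ℕ => (⌊c * 2^m⌋₊ : ℝ) / 2^m) Filter.atTop (nhds c) :=
    (tendsto_nat_floor_mul_div_atTop hc1).comp h2pow
  have hlim : Filter.Tendsto (fun m : ℕ => F ((⌊c * 2^m⌋₊ : ℝ) / 2^m)) Filter.atTop
      (nhds (F c)) := (hFc.tendsto c).comp hflim
  exact psd_limit hdy hlim

theorem mpow_avg_le_geomMean' (X Y : Matrix n n ℂ) (hX : X.PosDef) (hY : Y.PosDef)
    (s : ℝ) (hs : s ∈ Set.Ico (-1 : ℝ) 0) :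
    (geomMean (mpow X s) (mpow Y s) - mpow (((2 : ℂ)⁻¹) • (X + Y)) s).PosSemidef := by
  obtain ⟨hs1, hs2⟩ := hs
  have hr1 : (0:ℝ) < -s := by linarith
  have hr2 : -s ≤ 1 := by linarith
  have hMpd : ((2:ℂ)⁻¹ • (X + Y)).PosDef := pd_half_smul (hX.add hY)
  have hXr := mpow_posDef hX (-s)
  have hYr := mpow_posDef hY (-s)
  have hMr := mpow_posDef hMpd (-s)
  have st1 := gm_le_avg hXr hYr
  have st2 := concAt_all hr1.le hr2 X Y hX hY
  have key : (mpow ((2:ℂ)⁻¹ • (X + Y)) (-s)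
      - geomMean (mpow X (-s)) (mpow Y (-s))).PosSemidef := loe_trans st1 st2
  have hGpd := gm_posDef hXr hYr
  have inv1 := inv_antitone hGpd hMr key
  rw [gm_inv hXr hYr] at inv1
  have e1 : (mpow X (-s))⁻¹ = mpow X s := by
    rw [mpow_inv hX (-s), neg_neg]
  have e2 : (mpow Y (-s))⁻¹ = mpow Y s := by
    rw [mpow_inv hY (-s), neg_neg]
  have e3 : (mpow ((2:ℂ)⁻¹ • (X + Y)) (-s))⁻¹ = mpow ((2:ℂ)⁻¹ • (X + Y)) s := by
    rw [mpow_inv hMpd (-s), neg_neg]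
  rw [e1, e2, e3] at inv1
  exact inv1

end

end AuxGM

/-- For positive definite `X`, `Y` and `s ∈ [−1, 0)`:
`((X+Y)/2)^s ≤ X^s # Y^s` in the Loewner order. -/
theorem mpow_avg_le_geomMean {n : Type*} [Fintype n] [DecidableEq n]
    (X Y : Matrix n n ℂ) (hX : X.PosDef) (hY : Y.PosDef)
    (s : ℝ) (hs : s ∈ Set.Ico (-1 : ℝ) 0) :
    (geomMean (mpow X s) (mpow Y s) - mpow (((2 : ℂ)⁻¹) • (X + Y)) s).PosSemidef :=
  AuxGM.mpow_avg_le_geomMean' X Y hX hY s hs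
end

section
/- Orthogonality of convex-splitting fluctuations: with the setup of the maps π_m, E_m and the weighted inner product ⟨X,Y⟩_{γ,σ} := Tr[X† σ^{1−γ} Y σ^γ], for m ≠ m̄ and any operators X, Y on A⊗B, one has ⟨(π_m − E_m)(X), (π_{m̄} − E_{m̄})(Y)⟩_{γ, τ_A^{⊗M} ⊗ σ_B} = 0. -/
open Matrix BigOperators ComplexOrder

section AuxOrtho

open Polynomial Finset

variable {n : Type*} [Fintype n] [DecidableEq n]

private lemma myConjPow (V D : Matrix n n ℂ) (hV : Vᴴ * V = 1) (hV' : V * Vᴴ = 1) (k : ℕ) :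
    (V * D * Vᴴ) ^ k = V * D ^ k * Vᴴ := by
  induction k with
  | zero => simpa using hV'.symm
  | succ k ih =>
      rw [pow_succ, ih, pow_succ]
      simp only [Matrix.mul_assoc]
      rw [← Matrix.mul_assoc Vᴴ V, hV, Matrix.one_mul]

private lemma aeval_conj_diag (V : Matrix n n ℂ) (hV : Vᴴ * V = 1) (hV' : V * Vᴴ = 1)
    (c : n → ℂ) (p : ℂ[X]) :
    Polynomial.aeval (V * Matrix.diagonal c * Vᴴ) p
      = V * Matrix.diagonal (fun i => p.eval (c i)) * Vᴴ := by
  rw [Polynomial.aeval_eq_sum_range]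
  have h1 : ∀ k : ℕ, (V * Matrix.diagonal c * Vᴴ) ^ k
      = V * Matrix.diagonal (fun i => c i ^ k) * Vᴴ := by
    intro k
    rw [myConjPow V _ hV hV' k, Matrix.diagonal_pow]
    rfl
  have h2 : ∀ k : ℕ, p.coeff k • (V * Matrix.diagonal (fun i => c i ^ k) * Vᴴ)
      = V * Matrix.diagonal (fun i => p.coeff k * c i ^ k) * Vᴴ := by
    intro k
    rw [← Matrix.smul_mul, ← Matrix.mul_smul, ← Matrix.diagonal_smul]
    congr 1
  simp_rw [h1, h2, ← Finset.sum_mul, ← Finset.mul_sum]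
  congr 1
  congr 1
  ext i j
  by_cases h : i = j
  · subst h
    simp [Matrix.sum_apply, Polynomial.eval_eq_sum_range]
  · simp [Matrix.sum_apply, Matrix.diagonal_apply_ne _ h]

private lemma mpow_aux (A W : Matrix n n ℂ) (hW : Wᴴ * W = 1) (d : n → ℝ)
    (hA : A = W * Matrix.diagonal (fun i => (d i : ℂ)) * Wᴴ)
    (hAh : A.IsHermitian) (r : ℝ) :
    (hAh.eigenvectorUnitary : Matrix n n ℂ) *
      Matrix.diagonal (fun i => ((hAh.eigenvalues i ^ r : ℝ) : ℂ)) *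
      (star (hAh.eigenvectorUnitary : Matrix n n ℂ))
      = W * Matrix.diagonal (fun i => ((d i ^ r : ℝ) : ℂ)) * Wᴴ := by
  classical
  have hW' : W * Wᴴ = 1 := mul_eq_one_comm.mp hW
  set E : Matrix n n ℂ := (hAh.eigenvectorUnitary : Matrix n n ℂ) with hE
  have hE1 : Eᴴ * E = 1 := by
    simpa [Matrix.star_eq_conjTranspose] using
      (Unitary.star_mul_self_of_mem hAh.eigenvectorUnitary.2)
  have hE1' : E * Eᴴ = 1 := mul_eq_one_comm.mp hE1
  have hspec : A = E * Matrix.diagonal (fun i => ((hAh.eigenvalues i : ℝ) : ℂ)) * Eᴴ := by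
    simpa [Matrix.star_eq_conjTranspose, Function.comp_def] using hAh.spectral_theorem
  set g : ℂ → ℂ := fun z => ((z.re ^ r : ℝ) : ℂ) with hg
  set s : Finset ℂ := (Finset.univ.image fun i => ((d i : ℝ) : ℂ)) ∪
      (Finset.univ.image fun i => ((hAh.eigenvalues i : ℝ) : ℂ)) with hs
  set p : ℂ[X] := Lagrange.interpolate s id g with hp
  have hpe : ∀ z ∈ s, p.eval z = g z := by
    intro z hz
    exact Lagrange.eval_interpolate_at_node (v := id) g (Set.injOn_id _) hz
  have h1 : Polynomial.aeval A p = W * Matrix.diagonal (fun i => ((d i ^ r : ℝ) : ℂ)) * Wᴴ := by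
    rw [hA, aeval_conj_diag W hW hW']
    have : (fun i => p.eval ((d i : ℝ) : ℂ)) = fun i => ((d i ^ r : ℝ) : ℂ) := by
      funext i
      rw [hpe _ (Finset.mem_union_left _ (Finset.mem_image_of_mem _ (Finset.mem_univ i)))]
      simp [hg]
    rw [this]
  have h2 : Polynomial.aeval A p = E * Matrix.diagonal
      (fun i => ((hAh.eigenvalues i ^ r : ℝ) : ℂ)) * Eᴴ := by
    conv_lhs => rw [hspec]
    rw [aeval_conj_diag E hE1 hE1']
    have : (fun i => p.eval ((hAh.eigenvalues i : ℝ) : ℂ))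
        = fun i => ((hAh.eigenvalues i ^ r : ℝ) : ℂ) := by
      funext i
      rw [hpe _ (Finset.mem_union_right _ (Finset.mem_image_of_mem _ (Finset.mem_univ i)))]
      simp [hg]
    rw [this]
  rw [Matrix.star_eq_conjTranspose]
  rw [← h2, h1]

private lemma mpow_eq_diag {A W : Matrix n n ℂ} {d : n → ℝ} (hW : Wᴴ * W = 1)
    (hA : A = W * Matrix.diagonal (fun i => (d i : ℂ)) * Wᴴ) (r : ℝ) :
    mpow A r = W * Matrix.diagonal (fun i => ((d i ^ r : ℝ) : ℂ)) * Wᴴ := by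
  have hAh : A.IsHermitian := by
    rw [hA]
    show _ᴴ = _
    rw [Matrix.conjTranspose_mul, Matrix.conjTranspose_mul, Matrix.conjTranspose_conjTranspose,
      Matrix.diagonal_conjTranspose]
    have : star (fun i => ((d i : ℝ) : ℂ)) = fun i => ((d i : ℝ) : ℂ) := by
      funext i
      simp
    rw [this, Matrix.mul_assoc]
  rw [mpow, dif_pos hAh]
  exact mpow_aux A W hW d hA hAh r

end AuxOrtho

section KronTpow

open Finset

set_option linter.unusedSectionVars false

variable {a b : Type*} [Fintype a] [DecidableEq a] [Fintype b] [DecidableEq b]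

private lemma kron_mul (A A' : Matrix a a ℂ) (B B' : Matrix b b ℂ) :
    kron (A * A') (B * B') = kron A B * kron A' B' := by
  ext p q
  simp only [kron, Matrix.mul_apply, Fintype.sum_prod_type, Finset.sum_mul, Finset.mul_sum]
  rw [Finset.sum_comm]
  apply Finset.sum_congr rfl
  intro i _
  apply Finset.sum_congr rfl
  intro j _
  ring

private lemma kron_conjT (A : Matrix a a ℂ) (B : Matrix b b ℂ) :
    kron Aᴴ Bᴴ = (kron A B)ᴴ := by
  ext p q
  simp [kron, Matrix.conjTranspose_apply]

private lemma kron_diag (c : a → ℂ) (e : b → ℂ) :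
    kron (Matrix.diagonal c) (Matrix.diagonal e)
      = Matrix.diagonal (fun p : a × b => c p.1 * e p.2) := by
  ext ⟨i, j⟩ ⟨k, l⟩
  simp only [kron, Matrix.diagonal_apply, Prod.mk.injEq]
  split_ifs with h1 h2 h3 h4 h5 <;> simp_all

private lemma prod_delta {M : ℕ} (f g : Fin M → a) :
    (∏ j, if f j = g j then (1 : ℂ) else 0) = if f = g then 1 else 0 := by
  by_cases h : f = g
  · subst h; simp
  · rw [if_neg h]
    obtain ⟨j, hj⟩ := Function.ne_iff.mp h
    exact Finset.prod_eq_zero (Finset.mem_univ j) (by simp [hj])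

private lemma tpow_mulm (A B : Matrix a a ℂ) (M : ℕ) :
    tpow (A * B) M = tpow A M * tpow B M := by
  ext f g
  have key := Finset.sum_prod_piFinset (Finset.univ : Finset a)
    (fun (j : Fin M) i => (A (f j) i * B i (g j) : ℂ))
  rw [Fintype.piFinset_univ] at key
  simp only [tpow, Matrix.mul_apply]
  rw [← key]
  apply Finset.sum_congr rfl
  intro h _
  exact Finset.prod_mul_distrib

private lemma tpow_conjT (A : Matrix a a ℂ) (M : ℕ) :
    tpow Aᴴ M = (tpow A M)ᴴ := by
  ext f g
  simp [tpow, Matrix.conjTranspose_apply]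

private lemma tpow_diag (c : a → ℂ) (M : ℕ) :
    tpow (Matrix.diagonal c) M
      = Matrix.diagonal (fun f : Fin M → a => ∏ j, c (f j)) := by
  ext f g
  by_cases h : f = g
  · subst h
    simp [tpow, Matrix.diagonal_apply_eq]
  · rw [Matrix.diagonal_apply_ne _ h]
    obtain ⟨j, hj⟩ := Function.ne_iff.mp h
    exact Finset.prod_eq_zero (Finset.mem_univ j) (Matrix.diagonal_apply_ne _ hj)

private lemma tpow_one' (M : ℕ) : tpow (1 : Matrix a a ℂ) M = 1 := by
  ext f g
  simp only [tpow, Matrix.one_apply]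
  exact prod_delta f g

private lemma kron_one' : kron (1 : Matrix a a ℂ) (1 : Matrix b b ℂ) = 1 := by
  ext ⟨i, j⟩ ⟨k, l⟩
  simp only [kron, Matrix.one_apply, Prod.mk.injEq]
  split_ifs <;> simp_all

private lemma eigU_star_mul {c : Type*} [Fintype c] [DecidableEq c]
    (A : Matrix c c ℂ) (hA : A.IsHermitian) :
    (hA.eigenvectorUnitary : Matrix c c ℂ)ᴴ * (hA.eigenvectorUnitary : Matrix c c ℂ) = 1 := by
  simpa [Matrix.star_eq_conjTranspose] using Unitary.star_mul_self_of_mem hA.eigenvectorUnitary.2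

private lemma spec_diag {c : Type*} [Fintype c] [DecidableEq c]
    (A : Matrix c c ℂ) (hA : A.IsHermitian) :
    A = (hA.eigenvectorUnitary : Matrix c c ℂ) *
        Matrix.diagonal (fun i => ((hA.eigenvalues i : ℝ) : ℂ)) *
        (hA.eigenvectorUnitary : Matrix c c ℂ)ᴴ := by
  rw [← Matrix.star_eq_conjTranspose]
  simpa [Function.comp_def] using hA.spectral_theorem

private lemma mpow_kron_tpow (τ : Matrix a a ℂ) (σ : Matrix b b ℂ)
    (hτ' : τ.PosDef) (hσ' : σ.PosDef) (M : ℕ) (r : ℝ) :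
    mpow (kron (tpow τ M) σ) r = kron (tpow (mpow τ r) M) (mpow σ r) := by
  have hτh : τ.IsHermitian := hτ'.1
  have hσh : σ.IsHermitian := hσ'.1
  set U : Matrix a a ℂ := (hτh.eigenvectorUnitary : Matrix a a ℂ) with hUdef
  set V : Matrix b b ℂ := (hσh.eigenvectorUnitary : Matrix b b ℂ) with hVdef
  have hU : Uᴴ * U = 1 := eigU_star_mul τ hτh
  have hV : Vᴴ * V = 1 := eigU_star_mul σ hσh
  have hτd : τ = U * Matrix.diagonal (fun i => ((hτh.eigenvalues i : ℝ) : ℂ)) * Uᴴ :=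
    spec_diag τ hτh
  have hσd : σ = V * Matrix.diagonal (fun i => ((hσh.eigenvalues i : ℝ) : ℂ)) * Vᴴ :=
    spec_diag σ hσh
  set W : Matrix ((Fin M → a) × b) ((Fin M → a) × b) ℂ := kron (tpow U M) V with hWdef
  have assemble : ∀ (lam : a → ℝ) (mu : b → ℝ),
      kron (tpow (U * Matrix.diagonal (fun i => ((lam i : ℝ) : ℂ)) * Uᴴ) M)
        (V * Matrix.diagonal (fun i => ((mu i : ℝ) : ℂ)) * Vᴴ)
      = W * Matrix.diagonal (fun p : (Fin M → a) × b =>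
          (((∏ j, lam (p.1 j)) * mu p.2 : ℝ) : ℂ)) * Wᴴ := by
    intro lam mu
    rw [tpow_mulm, tpow_mulm, tpow_diag, tpow_conjT, kron_mul, kron_mul, kron_diag, kron_conjT,
      hWdef]
    congr 2
    funext p
    push_cast
    ring
  have hW : Wᴴ * W = 1 := by
    rw [hWdef, ← kron_conjT, ← tpow_conjT, ← kron_mul, ← tpow_mulm, hU, hV, tpow_one', kron_one']
  have hSd : kron (tpow τ M) σ
      = W * Matrix.diagonal (fun p : (Fin M → a) × b =>
          (((∏ j, hτh.eigenvalues (p.1 j)) * hσh.eigenvalues p.2 : ℝ) : ℂ)) * Wᴴ := by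
    conv_lhs => rw [hτd, hσd]
    exact assemble _ _
  rw [mpow_eq_diag hW hSd r]
  rw [mpow_eq_diag hU hτd r, mpow_eq_diag hV hσd r, assemble _ _]
  congr 2
  funext p q
  simp only [Matrix.diagonal_apply]
  split_ifs with hpq
  · norm_cast
    rw [Real.mul_rpow (Finset.prod_nonneg fun i _ => (hτ'.eigenvalues_pos _).le)
      (hσ'.eigenvalues_pos p.2).le,
      ← Real.finset_prod_rpow _ _ (fun i _ => (hτ'.eigenvalues_pos _).le) r]
  · rfl

private lemma mpow_mul_mpow_posdef (τ : Matrix a a ℂ) (hτ' : τ.PosDef) (γ : ℝ) :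
    mpow τ γ * mpow τ (1 - γ) = τ := by
  have hτh : τ.IsHermitian := hτ'.1
  set U : Matrix a a ℂ := (hτh.eigenvectorUnitary : Matrix a a ℂ) with hUdef
  have hU : Uᴴ * U = 1 := eigU_star_mul τ hτh
  have hτd : τ = U * Matrix.diagonal (fun i => ((hτh.eigenvalues i : ℝ) : ℂ)) * Uᴴ :=
    spec_diag τ hτh
  rw [mpow_eq_diag hU hτd γ, mpow_eq_diag hU hτd (1 - γ)]
  simp only [Matrix.mul_assoc]
  rw [← Matrix.mul_assoc Uᴴ U, hU, Matrix.one_mul,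
    ← Matrix.mul_assoc (Matrix.diagonal _) (Matrix.diagonal _), Matrix.diagonal_mul_diagonal]
  conv_rhs => rw [hτd]
  simp only [Matrix.mul_assoc]
  congr 2
  funext i q
  simp only [Matrix.diagonal_apply]
  split_ifs with hpq
  · rw [← Complex.ofReal_mul, ← Real.rpow_add (hτ'.eigenvalues_pos i)]
    have : γ + (1 - γ) = 1 := by ring
    rw [this, Real.rpow_one]
  · rfl

end KronTpow

section MainAux

open Finset

private lemma trace_mul4 {n : Type*} [Fintype n] (A B C D : Matrix n n ℂ) :
    (A * B * C * D).trace
      = ∑ t : n × n × n × n,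
          A t.1 t.2.2.2 * B t.2.2.2 t.2.2.1 * C t.2.2.1 t.2.1 * D t.2.1 t.1 := by
  simp only [Matrix.trace, Matrix.diag, Matrix.mul_apply, Finset.sum_mul, Fintype.sum_prod_type]

private def quadEquiv (a b : Type*) (M : ℕ) :
    ((Fin M → a × a × a × a) × (b × b × b × b)) ≃
      (((Fin M → a) × b) × ((Fin M → a) × b) × ((Fin M → a) × b) × ((Fin M → a) × b)) where
  toFun u := (((fun j => (u.1 j).1), u.2.1),
              (((fun j => (u.1 j).2.1), u.2.2.1),
               (((fun j => (u.1 j).2.2.1), u.2.2.2.1),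
                ((fun j => (u.1 j).2.2.2), u.2.2.2.2))))
  invFun y := ((fun j => (y.1.1 j, y.2.1.1 j, y.2.2.1.1 j, y.2.2.2.1 j)),
               (y.1.2, y.2.1.2, y.2.2.1.2, y.2.2.2.2))
  left_inv _ := rfl
  right_inv _ := rfl

private lemma star_ite01 (P : Prop) [Decidable P] :
    star (if P then (1 : ℂ) else 0) = if P then 1 else 0 := by
  split_ifs <;> simp

private lemma prod_pick {M : ℕ} (m : Fin M) (c d : Fin M → ℂ) :
    (∏ j, if j = m then c j else d j) = c m * ∏ j ∈ Finset.univ.erase m, d j := by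
  rw [← Finset.mul_prod_erase Finset.univ _ (Finset.mem_univ m), if_pos rfl]
  congr 1
  apply Finset.prod_congr rfl
  intro j hj
  rw [if_neg (Finset.mem_erase.mp hj).1]

end MainAux

/-- Orthogonality of the convex-splitting fluctuations: for `m ≠ m̄`,
`⟨(πₘ − Eₘ)(X), (π_{m̄} − E_{m̄})(Y)⟩_{γ, τ^{⊗M} ⊗ σ} = 0`. -/
theorem fluctuations_orthogonal {a b : Type*}
    [Fintype a] [DecidableEq a] [Fintype b] [DecidableEq b]
    (τ : Matrix a a ℂ) (σ : Matrix b b ℂ)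
    (hτ : IsDensity τ) (hτ' : τ.PosDef) (hσ : IsDensity σ) (hσ' : σ.PosDef)
    (M : ℕ) (γ : ℝ) (hγ : γ ∈ Set.Icc (0 : ℝ) 1)
    (m m' : Fin M) (hmm : m ≠ m')
    (X Y : Matrix (a × b) (a × b) ℂ) :
    winner γ (kron (tpow τ M) σ)
      (piMap M m X - eMap τ M m X) (piMap M m' Y - eMap τ M m' Y) = 0 := by
  classical
  obtain ⟨hτps, hτtr⟩ := hτ
  have hP : mpow (kron (tpow τ M) σ) (1 - γ) = kron (tpow (mpow τ (1 - γ)) M) (mpow σ (1 - γ)) :=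
    mpow_kron_tpow τ σ hτ' hσ' M (1 - γ)
  have hQ : mpow (kron (tpow τ M) σ) γ = kron (tpow (mpow τ γ) M) (mpow σ γ) :=
    mpow_kron_tpow τ σ hτ' hσ' M γ
  have hBA : mpow τ γ * mpow τ (1 - γ) = τ := mpow_mul_mpow_posdef τ hτ' γ
  have htr : (∑ i, τ i i) = 1 := by simpa [Matrix.trace, Matrix.diag] using hτtr
  rw [winner, hP, hQ, trace_mul4]
  rw [← Equiv.sum_comp (quadEquiv a b M)]
  rw [Fintype.sum_prod_type_right]
  apply Finset.sum_eq_zero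
  rintro ⟨w, z, y, x⟩ -
  set Aτ := mpow τ (1 - γ) with hAτdef
  set Bτ := mpow τ γ with hBτdef
  set Cσ := mpow σ (1 - γ) with hCσdef
  set Dσ := mpow σ γ with hDσdef
  set Tj : Fin M → (a × a × a × a) → ℂ := fun j t =>
    (if j = m then
        star (X (t.2.2.2, x) (t.1, w)) -
          star (∑ i, ∑ i', X (i, x) (i', w) * τ i' i) * (if t.2.2.2 = t.1 then 1 else 0)
      else if t.2.2.2 = t.1 then 1 else 0) *
    ((if j = m' then
        Y (t.2.2.1, y) (t.2.1, z) -
          (∑ i, ∑ i', Y (i, y) (i', z) * τ i' i) * (if t.2.2.1 = t.2.1 then 1 else 0)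
      else if t.2.2.1 = t.2.1 then 1 else 0) *
     (Aτ t.2.2.2 t.2.2.1 * Bτ t.2.1 t.1)) with hTj
  have hfAB : ∀ h k : a, (∑ f : a, Aτ f h * Bτ k f) = τ k h := by
    intro h k
    have h2 : (Bτ * Aτ) k h = τ k h := by rw [hBA]
    rw [Matrix.mul_apply] at h2
    rw [← h2]
    exact Finset.sum_congr rfl fun f _ => mul_comm _ _
  have hzero : ∑ F : Fin M → a × a × a × a, ∏ j, Tj j (F j) = 0 := by
    have key := Finset.sum_prod_piFinset (Finset.univ : Finset (a × a × a × a)) Tj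
    rw [Fintype.piFinset_univ] at key
    rw [key]
    apply Finset.prod_eq_zero (Finset.mem_univ m')
    simp only [hTj]
    simp only [if_neg (Ne.symm hmm), if_pos rfl]
    simp only [Fintype.sum_prod_type]
    simp only [ite_mul, one_mul, zero_mul, Finset.sum_ite_eq', Finset.mem_univ, if_true]
    trans (∑ k : a, ∑ h : a,
      (Y (h, y) (k, z) - (∑ i, ∑ i', Y (i, y) (i', z) * τ i' i) * (if h = k then 1 else 0)) * τ k h)
    · rw [Finset.sum_comm]
      refine Finset.sum_congr rfl fun k _ => ?_
      rw [Finset.sum_comm]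
      refine Finset.sum_congr rfl fun h _ => ?_
      rw [← hfAB h k, Finset.mul_sum]
    · simp only [sub_mul, Finset.sum_sub_distrib]
      have e1 : (∑ k : a, ∑ h : a, Y (h, y) (k, z) * τ k h)
          = ∑ i, ∑ i', Y (i, y) (i', z) * τ i' i := Finset.sum_comm
      have e2 : (∑ k : a, ∑ h : a,
          ((∑ i, ∑ i', Y (i, y) (i', z) * τ i' i) * (if h = k then 1 else 0)) * τ k h)
          = ∑ i, ∑ i', Y (i, y) (i', z) * τ i' i := by
        simp only [mul_ite, mul_one, mul_zero, ite_mul, zero_mul]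
        simp only [Finset.sum_ite_eq', Finset.mem_univ, if_true]
        rw [← Finset.mul_sum, htr, mul_one]
      rw [e1, e2, sub_self]
  trans (∑ F : Fin M → a × a × a × a, (Cσ x y * Dσ z w) * ∏ j, Tj j (F j))
  · refine Finset.sum_congr rfl fun F _ => ?_
    simp only [quadEquiv, Equiv.coe_fn_mk, Matrix.conjTranspose_apply, Matrix.sub_apply,
      piMap, eMap, kron, tpow, hTj]
    rw [← Finset.mul_prod_erase Finset.univ
        (fun j => if (F j).2.2.2 = (F j).1 then (1 : ℂ) else 0) (Finset.mem_univ m),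
      ← Finset.mul_prod_erase Finset.univ
        (fun j => if (F j).2.2.1 = (F j).2.1 then (1 : ℂ) else 0) (Finset.mem_univ m')]
    simp only [star_sub, star_mul', star_prod, star_ite01]
    simp only [Finset.prod_mul_distrib]
    rw [prod_pick m, prod_pick m']
    ring
  · rw [← Finset.mul_sum, hzero, mul_zero]
end
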